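/- For every integer m ≥ 2, the graph P_m is vertex decomposable, and a vertex v is a shedding vertex of P_m if and only if v = z_1 or v = z_2; that is, Shed(P_m) = {z_1, z_2}. -/

import Mathlib

open scoped Classical

variable {V : Type*}

/-- `S` is an independent set of the induced subgraph of `G` on the vertex set `A`. -/
def IsIndepIn (G : SimpleGraph V) (A S : Finset V) : Prop :=
  S ⊆ A ∧ ∀ u ∈ S, ∀ v ∈ S, ¬ G.Adj u v

/-- `S` is a maximal independent set of the induced subgraph of `G` on the vertex set `A`. -/
def IsMaxIndepIn (G : SimpleGraph V) (A S : Finset V) : Prop :=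
  IsIndepIn G A S ∧ ∀ T, IsIndepIn G A T → S ⊆ T → T = S

/-- The induced subgraph of `G` on the vertex set `A` is well-covered: all of its
maximal independent sets have the same cardinality. -/
def WellCoveredOn (G : SimpleGraph V) (A : Finset V) : Prop :=
  ∀ S T, IsMaxIndepIn G A S → IsMaxIndepIn G A T → S.card = T.card

/-- The closed neighbourhood of `x` deleted from `A`: the vertices of `A` distinct from `x`
and not adjacent to `x`. -/
noncomputable def delClosedNbhd (G : SimpleGraph V) (A : Finset V) (x : V) : Finset V :=
  A.filter fun y => y ≠ x ∧ ¬ G.Adj x y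

/-- The induced subgraph of `G` on the vertex set `A` is vertex decomposable: it is
well-covered, and either it has no edges, or some vertex `x ∈ A` is such that deleting `x`,
respectively the closed neighbourhood of `x`, leaves a vertex decomposable graph. -/
def VertexDecomposableOn (G : SimpleGraph V) (A : Finset V) : Prop :=
  WellCoveredOn G A ∧
    ((∀ u ∈ A, ∀ v ∈ A, ¬ G.Adj u v) ∨
      ∃ x, ∃ _h : x ∈ A,
        VertexDecomposableOn G (A.erase x) ∧
        VertexDecomposableOn G (delClosedNbhd G A x))
termination_by A.card
decreasing_by
  · exact Finset.card_erase_lt_of_mem (by assumption)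
  · exact Finset.card_lt_card
      (Finset.filter_ssubset.mpr ⟨x, by assumption, by simp⟩)

/-- A finite simple graph is well-covered if all of its maximal independent sets have the
same cardinality. -/
def WellCovered (G : SimpleGraph V) [Fintype V] : Prop :=
  WellCoveredOn G Finset.univ

/-- A finite simple graph is vertex decomposable. -/
def VertexDecomposable (G : SimpleGraph V) [Fintype V] : Prop :=
  VertexDecomposableOn G Finset.univ

/-- The set of shedding vertices of `G` : those vertices `x` such that both `G \ x` and
`G \ N[x]` are vertex decomposable. -/
def Shed (G : SimpleGraph V) [Fintype V] : Set V :=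
  {x | VertexDecomposableOn G (Finset.univ.erase x) ∧
       VertexDecomposableOn G (delClosedNbhd G Finset.univ x)}

/-- `D` is a dominating set of `G`: every vertex not in `D` is adjacent to a vertex of `D`. -/
def IsDominatingSet (G : SimpleGraph V) (D : Set V) : Prop :=
  ∀ v, v ∉ D → ∃ u ∈ D, G.Adj u v

/-- A vertex is simplicial if its neighbourhood induces a clique. -/
def IsSimplicialVertex (G : SimpleGraph V) (x : V) : Prop :=
  ∀ u v, G.Adj x u → G.Adj x v → u ≠ v → G.Adj u v

/-- The graph `P_m` on the vertex set `X ⊕ Y ⊕ Z` with `X = Fin (2*m)`, `Y = Fin 2`,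
`Z = Fin 3` (all 0-indexed, so the paper's `x_j`, `y_j`, `z_j` are indices `j - 1`).
Its edges are exactly: `X` induces the complete `m`-partite graph `K_{2,…,2}` whose
complement is the matching pairing `x_{2i}` with `x_{2i+1}`; `y_0` is adjacent to `z_0`
and to every even-indexed vertex of `X`; `y_1` is adjacent to `z_1` and to every
odd-indexed vertex of `X`; and `Z` induces a complete graph `K_3`. -/
def Pgraph (m : ℕ) : SimpleGraph (Fin (2 * m) ⊕ Fin 2 ⊕ Fin 3) :=
  SimpleGraph.fromRel fun p q =>
    match p, q with
    | Sum.inl a, Sum.inl b => a.val / 2 ≠ b.val / 2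
    | Sum.inr (Sum.inl y), Sum.inl a => a.val % 2 = y.val
    | Sum.inr (Sum.inl y), Sum.inr (Sum.inr z) => y.val = z.val
    | Sum.inr (Sum.inr z), Sum.inr (Sum.inr w) => z ≠ w
    | _, _ => False

section Aux

variable {G : SimpleGraph V} {A S T : Finset V}

lemma maxIndep_iff :
    IsMaxIndepIn G A S ↔
      IsIndepIn G A S ∧ ∀ v ∈ A, v ∉ S → ∃ u ∈ S, G.Adj u v := by
  constructor
  · rintro ⟨hi, hmax⟩
    refine ⟨hi, fun v hvA hvS => ?_⟩
    by_contra h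
    push_neg at h
    have hT : IsIndepIn G A (insert v S) := by
      refine ⟨Finset.insert_subset hvA hi.1, ?_⟩
      intro u hu w hw
      rcases Finset.mem_insert.1 hu with h1 | h1 <;>
        rcases Finset.mem_insert.1 hw with h2 | h2
      · subst h1; subst h2; exact G.irrefl
      · subst h1; exact fun had => h w h2 (G.adj_symm had)
      · subst h2; exact h u h1
      · exact hi.2 u h1 w h2
    have := hmax _ hT (Finset.subset_insert _ _)
    exact hvS (this ▸ Finset.mem_insert_self v S)
  · rintro ⟨hi, hd⟩
    refine ⟨hi, fun T hT hST => ?_⟩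
    refine Finset.Subset.antisymm (fun w hw => ?_) hST
    by_contra hwS
    obtain ⟨u, hu, hadj⟩ := hd w (hT.1 hw) hwS
    exact hT.2 u (hST hu) w hw hadj

lemma wc_of_card (n : ℕ) (h : ∀ S, IsMaxIndepIn G A S → S.card = n) :
    WellCoveredOn G A := fun S T hS hT => (h S hS).trans (h T hT).symm

lemma vd_wc (h : VertexDecomposableOn G A) : WellCoveredOn G A := by
  rw [VertexDecomposableOn] at h; exact h.1

lemma not_vd_of_maxIndep (hS : IsMaxIndepIn G A S) (hT : IsMaxIndepIn G A T)
    (hne : S.card ≠ T.card) : ¬ VertexDecomposableOn G A := fun h =>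
  hne (vd_wc h S T hS hT)

lemma vd_of_no_edges (h : ∀ u ∈ A, ∀ v ∈ A, ¬ G.Adj u v) :
    VertexDecomposableOn G A := by
  rw [VertexDecomposableOn]
  refine ⟨fun S T hS hT => ?_, Or.inl h⟩
  have hA : IsIndepIn G A A := ⟨Finset.Subset.refl A, h⟩
  rw [← hS.2 A hA hS.1.1, ← hT.2 A hA hT.1.1]

lemma vd_step (x : V) (hx : x ∈ A)
    (hwc : WellCoveredOn G A)
    (h1 : VertexDecomposableOn G (A.erase x))
    (h2 : VertexDecomposableOn G (delClosedNbhd G A x)) :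
    VertexDecomposableOn G A := by
  rw [VertexDecomposableOn]
  exact ⟨hwc, Or.inr ⟨x, hx, h1, h2⟩⟩

lemma maxIndep_nonempty (hS : IsMaxIndepIn G A S) {a : V} (ha : a ∈ A) :
    S.Nonempty := by
  rcases S.eq_empty_or_nonempty with rfl | h
  · obtain ⟨u, hu, -⟩ := (maxIndep_iff.1 hS).2 a ha (Finset.notMem_empty a)
    exact absurd hu (Finset.notMem_empty u)
  · exact h

lemma vd_of_card_le_two (h : A.card ≤ 2) : VertexDecomposableOn G A := by
  by_cases he : ∀ u ∈ A, ∀ v ∈ A, ¬ G.Adj u v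
  · exact vd_of_no_edges he
  · push_neg at he
    obtain ⟨u, hu, v, hv, hadj⟩ := he
    have huv : u ≠ v := G.ne_of_adj hadj
    have hA : A = {u, v} := by
      refine (Finset.eq_of_subset_of_card_le (Finset.insert_subset hu
        (Finset.singleton_subset_iff.2 hv)) ?_).symm
      rw [Finset.card_insert_of_notMem (by simpa using huv), Finset.card_singleton]
      exact h
    subst hA
    have hcard : ∀ S, IsMaxIndepIn G {u, v} S → S.card = 1 := by
      intro S hS
      have hne := maxIndep_nonempty hS (Finset.mem_insert_self u {v})
      have hsub := hS.1.1
      have : ¬ (u ∈ S ∧ v ∈ S) := fun ⟨h1, h2⟩ => hS.1.2 u h1 v h2 hadj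
      by_cases h1 : u ∈ S
      · have h2 : v ∉ S := fun hv2 => this ⟨h1, hv2⟩
        have : S = {u} := by
          ext w
          simp only [Finset.mem_singleton]
          constructor
          · intro hw
            rcases Finset.mem_insert.1 (hsub hw) with rfl | hw2
            · rfl
            · exact absurd (Finset.mem_singleton.1 hw2 ▸ hw) h2
          · rintro rfl; exact h1
        rw [this, Finset.card_singleton]
      · have : S = {v} := by
          ext w
          simp only [Finset.mem_singleton]
          constructor
          · intro hw
            rcases Finset.mem_insert.1 (hsub hw) with rfl | hw2
            · exact absurd hw h1
            · exact Finset.mem_singleton.1 hw2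
          · rintro rfl
            obtain ⟨w', hw'⟩ := hne
            rcases Finset.mem_insert.1 (hsub hw') with rfl | hw2
            · exact absurd hw' h1
            · exact Finset.mem_singleton.1 hw2 ▸ hw'
        rw [this, Finset.card_singleton]
    refine vd_step u (Finset.mem_insert_self u {v}) (wc_of_card 1 hcard) ?_ ?_
    · apply vd_of_no_edges
      intro a ha b hb
      have ha' : a = v := by
        have := Finset.mem_of_mem_erase ha
        have hne := Finset.ne_of_mem_erase ha
        rcases Finset.mem_insert.1 this with rfl | h2
        · exact absurd rfl hne
        · exact Finset.mem_singleton.1 h2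
      have hb' : b = v := by
        have := Finset.mem_of_mem_erase hb
        have hne := Finset.ne_of_mem_erase hb
        rcases Finset.mem_insert.1 this with rfl | h2
        · exact absurd rfl hne
        · exact Finset.mem_singleton.1 h2
      subst ha'; subst hb'; exact G.irrefl
    · apply vd_of_no_edges
      intro a ha
      rw [delClosedNbhd, Finset.mem_filter] at ha
      obtain ⟨haA, hne2, hnadj⟩ := ha
      rcases Finset.mem_insert.1 haA with rfl | h2
      · exact absurd rfl hne2
      · exact absurd (Finset.mem_singleton.1 h2 ▸ hadj) hnadj

lemma max_transfer {B : Finset V} {w : V} (hw : w ∈ S)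
    (hmax : IsMaxIndepIn G A S) (hBA : B ⊆ A)
    (hSB : ∀ v ∈ S, v ≠ w → v ∈ B) (hwB : w ∉ B)
    (hwadj : ∀ v ∈ B, ¬ G.Adj w v) :
    IsMaxIndepIn G B (S.erase w) := by
  rw [maxIndep_iff] at hmax ⊢
  obtain ⟨⟨hsub, hind⟩, hdom⟩ := hmax
  refine ⟨⟨fun v hv => hSB v (Finset.mem_of_mem_erase hv) (Finset.ne_of_mem_erase hv),
    fun u hu v hv => hind u (Finset.mem_of_mem_erase hu) v (Finset.mem_of_mem_erase hv)⟩,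
    fun v hvB hvS => ?_⟩
  have hvw : v ≠ w := fun h => hwB (h ▸ hvB)
  have hvS' : v ∉ S := fun h => hvS (Finset.mem_erase.2 ⟨hvw, h⟩)
  obtain ⟨u, hu, hadj⟩ := hdom v (hBA hvB) hvS'
  have huw : u ≠ w := fun h => hwadj v hvB (h ▸ hadj)
  exact ⟨u, Finset.mem_erase.2 ⟨huw, hu⟩, hadj⟩

end Aux
section PG

variable {m : ℕ}

/-- vertex of `X` -/
abbrev vX (a : Fin (2*m)) : Fin (2*m) ⊕ Fin 2 ⊕ Fin 3 := Sum.inl a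
/-- vertex of `Y` -/
abbrev vY (i : Fin 2) : Fin (2*m) ⊕ Fin 2 ⊕ Fin 3 := Sum.inr (Sum.inl i)
/-- vertex of `Z` -/
abbrev vZ (k : Fin 3) : Fin (2*m) ⊕ Fin 2 ⊕ Fin 3 := Sum.inr (Sum.inr k)

@[simp] lemma fin2_v0 : ((0:Fin 2)).val = 0 := rfl
@[simp] lemma fin2_v1 : ((1:Fin 2)).val = 1 := rfl
@[simp] lemma fin3_v0 : ((0:Fin 3)).val = 0 := rfl
@[simp] lemma fin3_v1 : ((1:Fin 3)).val = 1 := rfl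
@[simp] lemma fin3_v2 : ((2:Fin 3)).val = 2 := rfl

lemma pg_adj_xx {a b : Fin (2*m)} :
    (Pgraph m).Adj (vX a) (vX b) ↔ a.val / 2 ≠ b.val / 2 := by
  simp only [Pgraph, SimpleGraph.fromRel_adj]
  constructor
  · rintro ⟨-, h | h⟩
    · exact h
    · exact fun hh => h hh.symm
  · intro h
    exact ⟨by simp only [ne_eq, Sum.inl.injEq]; rintro rfl; exact h rfl, Or.inl h⟩

lemma pg_adj_xy {a : Fin (2*m)} {i : Fin 2} :
    (Pgraph m).Adj (vX a) (vY i) ↔ a.val % 2 = i.val := by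
  simp only [Pgraph, SimpleGraph.fromRel_adj]
  constructor
  · rintro ⟨-, h | h⟩
    · exact h.elim
    · exact h
  · intro h
    exact ⟨by simp, Or.inr h⟩

lemma pg_adj_yx {a : Fin (2*m)} {i : Fin 2} :
    (Pgraph m).Adj (vY i) (vX a) ↔ a.val % 2 = i.val :=
  (Pgraph m).adj_comm _ _ |>.trans pg_adj_xy

lemma pg_adj_xz {a : Fin (2*m)} {k : Fin 3} : ¬ (Pgraph m).Adj (vX a) (vZ k) := by
  simp only [Pgraph, SimpleGraph.fromRel_adj]
  rintro ⟨-, h | h⟩ <;> exact h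

lemma pg_adj_zx {a : Fin (2*m)} {k : Fin 3} : ¬ (Pgraph m).Adj (vZ k) (vX a) :=
  fun h => pg_adj_xz h.symm

lemma pg_adj_yy {i j : Fin 2} : ¬ (Pgraph m).Adj (vY i) (vY j) := by
  simp only [Pgraph, SimpleGraph.fromRel_adj]
  rintro ⟨-, h | h⟩ <;> exact h

lemma pg_adj_yz {i : Fin 2} {k : Fin 3} :
    (Pgraph m).Adj (vY i) (vZ k) ↔ i.val = k.val := by
  simp only [Pgraph, SimpleGraph.fromRel_adj]
  constructor
  · rintro ⟨-, h | h⟩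
    · exact h
    · exact h.elim
  · intro h
    exact ⟨by simp, Or.inl h⟩

lemma pg_adj_zy {i : Fin 2} {k : Fin 3} :
    (Pgraph m).Adj (vZ k) (vY i) ↔ i.val = k.val :=
  (Pgraph m).adj_comm _ _ |>.trans pg_adj_yz

lemma pg_adj_zz {k l : Fin 3} :
    (Pgraph m).Adj (vZ k) (vZ l) ↔ k ≠ l := by
  simp only [Pgraph, SimpleGraph.fromRel_adj]
  constructor
  · rintro ⟨h, -⟩
    simp only [ne_eq, Sum.inr.injEq] at h
    exact fun hh => h (by rw [hh])
  · intro h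
    exact ⟨by simpa using h, Or.inl h⟩

variable {px : Fin (2*m) → Prop} {py : Fin 2 → Prop} {pz : Fin 3 → Prop}

/-- A subset of the vertices of `P_m` described by predicates on the pieces. -/
noncomputable def mkSet (px : Fin (2*m) → Prop) (py : Fin 2 → Prop) (pz : Fin 3 → Prop) :
    Finset (Fin (2*m) ⊕ Fin 2 ⊕ Fin 3) :=
  Finset.univ.filter (Sum.elim px (Sum.elim py pz))

@[simp] lemma mem_mkSet_x {a : Fin (2*m)} :
    vX a ∈ mkSet px py pz ↔ px a := by simp [mkSet]

@[simp] lemma mem_mkSet_y {i : Fin 2} :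
    vY i ∈ mkSet px py pz ↔ py i := by simp [mkSet]

@[simp] lemma mem_mkSet_z {k : Fin 3} :
    vZ k ∈ mkSet px py pz ↔ pz k := by simp [mkSet]

lemma mkSet_congr {px' : Fin (2*m) → Prop} {py'} {pz'}
    (hx : ∀ a : Fin (2*m), px a ↔ px' a) (hy : ∀ i : Fin 2, py i ↔ py' i)
    (hz : ∀ k : Fin 3, pz k ↔ pz' k) :
    mkSet px py pz = mkSet px' py' pz' := by
  ext v
  rcases v with a | i | k <;> simp only [mem_mkSet_x, mem_mkSet_y, mem_mkSet_z, hx, hy, hz]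

lemma univ_eq_mkSet :
    (Finset.univ : Finset (Fin (2*m) ⊕ Fin 2 ⊕ Fin 3)) =
      mkSet (fun _ => True) (fun _ => True) (fun _ => True) := by
  ext v
  rcases v with a | i | k <;> simp

lemma mkSet_erase_x {inst : DecidableEq (Fin (2*m) ⊕ Fin 2 ⊕ Fin 3)} (j : Fin (2*m)) :
    (@Finset.erase _ inst (mkSet px py pz) (vX j)) =
      mkSet (fun a => px a ∧ a ≠ j) py pz := by
  ext v
  rcases v with a | i | k <;>
    simp [Finset.mem_erase, and_comm]

lemma mkSet_erase_y {inst : DecidableEq (Fin (2*m) ⊕ Fin 2 ⊕ Fin 3)} (j : Fin 2) :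
    (@Finset.erase _ inst (mkSet px py pz) (vY j)) =
      mkSet px (fun i => py i ∧ i ≠ j) pz := by
  ext v
  rcases v with a | i | k <;>
    simp [Finset.mem_erase, and_comm]

lemma mkSet_erase_z {inst : DecidableEq (Fin (2*m) ⊕ Fin 2 ⊕ Fin 3)} (j : Fin 3) :
    (@Finset.erase _ inst (mkSet px py pz) (vZ j)) =
      mkSet px py (fun k => pz k ∧ k ≠ j) := by
  ext v
  rcases v with a | i | k <;>
    simp [Finset.mem_erase, and_comm]

lemma mkSet_delN_x (j : Fin (2*m)) :
    delClosedNbhd (Pgraph m) (mkSet px py pz) (vX j) =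
      mkSet (fun a => px a ∧ a ≠ j ∧ a.val / 2 = j.val / 2)
        (fun i => py i ∧ j.val % 2 ≠ i.val) pz := by
  ext v
  rcases v with a | i | k
  · simp only [delClosedNbhd, Finset.mem_filter, mem_mkSet_x, pg_adj_xx, ne_eq,
      Sum.inl.injEq, not_not]
    constructor
    · rintro ⟨h1, h2, h3⟩; exact ⟨h1, h2, h3.symm⟩
    · rintro ⟨h1, h2, h3⟩; exact ⟨h1, h2, h3.symm⟩
  · simp only [delClosedNbhd, Finset.mem_filter, mem_mkSet_y, pg_adj_xy, pg_adj_yx,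
      ne_eq, reduceCtorEq, not_false_eq_true, true_and]
  · simp only [delClosedNbhd, Finset.mem_filter, mem_mkSet_z, ne_eq, reduceCtorEq,
      not_false_eq_true, true_and, pg_adj_xz, and_true]

lemma mkSet_delN_z (j : Fin 3) :
    delClosedNbhd (Pgraph m) (mkSet px py pz) (vZ j) =
      mkSet px (fun i => py i ∧ i.val ≠ j.val) (fun _ => False) := by
  ext v
  rcases v with a | i | k
  · simp only [delClosedNbhd, Finset.mem_filter, mem_mkSet_x, ne_eq, reduceCtorEq,
      not_false_eq_true, true_and, pg_adj_zx, and_true]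
  · simp only [delClosedNbhd, Finset.mem_filter, mem_mkSet_y, pg_adj_zy, ne_eq,
      Sum.inr.injEq, reduceCtorEq, not_false_eq_true, true_and]
  · constructor
    · intro hmem
      simp only [delClosedNbhd, Finset.mem_filter] at hmem
      obtain ⟨-, h2, h3⟩ := hmem
      exfalso
      rcases eq_or_ne k j with rfl | hne
      · exact h2 rfl
      · exact h3 (pg_adj_zz.2 hne.symm)
    · intro hmem
      simp at hmem

end PG
section Sets

variable {m : ℕ}

/-- `X_{<n} ∪ {y₀, y₁}` -/
noncomputable def sD (n : ℕ) : Finset (Fin (2*m) ⊕ Fin 2 ⊕ Fin 3) :=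
  mkSet (fun a => a.val < n) (fun _ => True) (fun _ => False)

/-- `X_{<n} ∪ {y₁}` -/
noncomputable def sB (n : ℕ) : Finset (Fin (2*m) ⊕ Fin 2 ⊕ Fin 3) :=
  mkSet (fun a => a.val < n) (fun i => i.val = 1) (fun _ => False)

/-- `X_{≥t} ∪ {y₀}` -/
noncomputable def sBg (t : ℕ) : Finset (Fin (2*m) ⊕ Fin 2 ⊕ Fin 3) :=
  mkSet (fun a => t ≤ a.val) (fun i => i.val = 0) (fun _ => False)

lemma card_sD {n : ℕ} (hn : 1 ≤ n) (hn2 : n ≤ 2*m) {S : Finset (Fin (2*m) ⊕ Fin 2 ⊕ Fin 3)}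
    (hS : IsMaxIndepIn (Pgraph m) (sD n) S) : S.card = 2 := by
  rw [maxIndep_iff] at hS
  obtain ⟨⟨hsub, hind⟩, hdom⟩ := hS
  have hy0m : (vY 0 : Fin (2*m) ⊕ Fin 2 ⊕ Fin 3) ∈ sD n := by simp [sD]
  have hy1m : (vY 1 : Fin (2*m) ⊕ Fin 2 ⊕ Fin 3) ∈ sD n := by simp [sD]
  by_cases h0 : (vY 0 : Fin (2*m) ⊕ Fin 2 ⊕ Fin 3) ∈ S <;>
    by_cases h1 : (vY 1 : Fin (2*m) ⊕ Fin 2 ⊕ Fin 3) ∈ S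
  · -- both y's
    have hSeq : S = {vY 0, vY 1} := by
      ext v
      simp only [Finset.mem_insert, Finset.mem_singleton]
      constructor
      · intro hv
        rcases v with b | i | k
        · exfalso
          have hb0 := hind _ hv _ h0
          have hb1 := hind _ hv _ h1
          rw [pg_adj_xy] at hb0 hb1
          simp only [Fin.val_zero, Fin.val_one] at hb0 hb1
          omega
        · have : i.val = 0 ∨ i.val = 1 := by omega
          rcases this with h | h
          · exact Or.inl (congrArg vY (Fin.ext h))
          · exact Or.inr (congrArg vY (Fin.ext h))
        · exact absurd (hsub hv) (by simp [sD])
      · rintro (rfl | rfl) <;> assumption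
    rw [hSeq, Finset.card_insert_of_notMem (by simp), Finset.card_singleton]
  · -- y0 ∈ S, y1 ∉ S : get an odd vertex
    obtain ⟨u, hu, hadj⟩ := hdom (vY 1) hy1m h1
    rcases u with o | i | k
    · have ho : o.val % 2 = 1 := by
        rw [pg_adj_xy] at hadj; simpa using hadj
      have hSeq : S = {vY 0, vX o} := by
        ext v
        simp only [Finset.mem_insert, Finset.mem_singleton]
        constructor
        · intro hv
          rcases v with b | i | k
          · right
            have hbo := hind _ hv _ hu
            simp only [pg_adj_xx, ne_eq, not_not] at hbo
            have hb0 := hind _ hv _ h0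
            rw [pg_adj_xy] at hb0
            simp only [Fin.val_zero] at hb0
            exact congrArg vX (Fin.ext (by omega))
          · have : i.val = 0 ∨ i.val = 1 := by omega
            rcases this with h | h
            · exact Or.inl (congrArg vY (Fin.ext h))
            · exact absurd (by rw [show i = (1 : Fin 2) from Fin.ext h] at hv; exact hv) h1
          · exact absurd (hsub hv) (by simp [sD])
        · rintro (rfl | rfl) <;> assumption
      rw [hSeq, Finset.card_insert_of_notMem (by simp), Finset.card_singleton]
    · exact absurd hadj pg_adj_yy
    · exact absurd (hsub hu) (by simp [sD])
  · -- y1 ∈ S, y0 ∉ S : get an even vertex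
    obtain ⟨u, hu, hadj⟩ := hdom (vY 0) hy0m h0
    rcases u with e | i | k
    · have he : e.val % 2 = 0 := by
        rw [pg_adj_xy] at hadj; simpa using hadj
      have hSeq : S = {vY 1, vX e} := by
        ext v
        simp only [Finset.mem_insert, Finset.mem_singleton]
        constructor
        · intro hv
          rcases v with b | i | k
          · right
            have hbe := hind _ hv _ hu
            simp only [pg_adj_xx, ne_eq, not_not] at hbe
            have hb1 := hind _ hv _ h1
            rw [pg_adj_xy] at hb1
            simp only [Fin.val_one] at hb1
            exact congrArg vX (Fin.ext (by omega))
          · have : i.val = 0 ∨ i.val = 1 := by omega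
            rcases this with h | h
            · exact absurd (by rw [show i = (0 : Fin 2) from Fin.ext h] at hv; exact hv) h0
            · exact Or.inl (congrArg vY (Fin.ext h))
          · exact absurd (hsub hv) (by simp [sD])
        · rintro (rfl | rfl) <;> assumption
      rw [hSeq, Finset.card_insert_of_notMem (by simp), Finset.card_singleton]
    · exact absurd hadj pg_adj_yy
    · exact absurd (hsub hu) (by simp [sD])
  · -- neither y
    obtain ⟨u, hu, hadj⟩ := hdom (vY 0) hy0m h0
    rcases u with e | i | k
    · obtain ⟨u', hu', hadj'⟩ := hdom (vY 1) hy1m h1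
      rcases u' with o | i | k
      · have he : e.val % 2 = 0 := by rw [pg_adj_xy] at hadj; simpa using hadj
        have ho : o.val % 2 = 1 := by rw [pg_adj_xy] at hadj'; simpa using hadj'
        have heo := hind _ hu _ hu'
        simp only [pg_adj_xx, ne_eq, not_not] at heo
        have hne : (vX e : Fin (2*m) ⊕ Fin 2 ⊕ Fin 3) ≠ vX o := by
          simp only [ne_eq, Sum.inl.injEq]
          intro h
          rw [h] at he
          omega
        have hSeq : S = {vX e, vX o} := by
          ext v
          simp only [Finset.mem_insert, Finset.mem_singleton]
          constructor
          · intro hv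
            rcases v with b | i | k
            · have hbe := hind _ hv _ hu
              simp only [pg_adj_xx, ne_eq, not_not] at hbe
              have hb : b.val % 2 = 0 ∨ b.val % 2 = 1 := by omega
              rcases hb with h | h
              · exact Or.inl (congrArg vX (Fin.ext (by omega)))
              · exact Or.inr (congrArg vX (Fin.ext (by omega)))
            · have : i.val = 0 ∨ i.val = 1 := by omega
              rcases this with h | h
              · exact absurd (by rw [show i = (0 : Fin 2) from Fin.ext h] at hv; exact hv) h0
              · exact absurd (by rw [show i = (1 : Fin 2) from Fin.ext h] at hv; exact hv) h1
            · exact absurd (hsub hv) (by simp [sD])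
          · rintro (rfl | rfl) <;> assumption
        rw [hSeq, Finset.card_insert_of_notMem (by simpa using hne), Finset.card_singleton]
      · exact absurd hadj' pg_adj_yy
      · exact absurd (hsub hu') (by simp [sD])
    · exact absurd hadj pg_adj_yy
    · exact absurd (hsub hu) (by simp [sD])

lemma card_sB {n : ℕ} (hn : 1 ≤ n) (hn2 : n ≤ 2*m) {S : Finset (Fin (2*m) ⊕ Fin 2 ⊕ Fin 3)}
    (hS : IsMaxIndepIn (Pgraph m) (sB n) S) : S.card = 2 := by
  rw [maxIndep_iff] at hS
  obtain ⟨⟨hsub, hind⟩, hdom⟩ := hS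
  have hy1m : (vY 1 : Fin (2*m) ⊕ Fin 2 ⊕ Fin 3) ∈ sB n := by simp [sB]
  have hyS : ∀ i : Fin 2, vY i ∈ S → i = 1 := by
    intro i hi
    have := hsub hi
    simp only [sB, mem_mkSet_y] at this
    exact Fin.ext (by omega)
  have hzS : ∀ k : Fin 3, vZ k ∈ S → False := by
    intro k hk
    have := hsub hk
    simp [sB] at this
  by_cases h1 : (vY 1 : Fin (2*m) ⊕ Fin 2 ⊕ Fin 3) ∈ S
  · -- y1 ∈ S; find an even X-vertex of S
    have hEx : ∃ e : Fin (2*m), vX e ∈ S ∧ e.val % 2 = 0 := by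
      have h2m : 0 < 2*m := by omega
      by_cases hx0 : (vX ⟨0, h2m⟩ : Fin (2*m) ⊕ Fin 2 ⊕ Fin 3) ∈ S
      · exact ⟨⟨0, h2m⟩, hx0, rfl⟩
      · obtain ⟨u, hu, hadj⟩ := hdom (vX ⟨0, h2m⟩) (by simp [sB]; omega) hx0
        rcases u with b | i | k
        · refine ⟨b, hu, ?_⟩
          have hb1 := hind _ hu _ h1
          rw [pg_adj_xy] at hb1
          simp only [Fin.val_one] at hb1
          omega
        · exfalso
          have := hyS i hu
          subst this
          rw [pg_adj_yx] at hadj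
          simp at hadj
        · exact absurd hu (by intro hh; exact hzS k hh)
    obtain ⟨e, heS, he⟩ := hEx
    have hSeq : S = {vY 1, vX e} := by
      ext v
      simp only [Finset.mem_insert, Finset.mem_singleton]
      constructor
      · intro hv
        rcases v with b | i | k
        · right
          have hbe := hind _ hv _ heS
          simp only [pg_adj_xx, ne_eq, not_not] at hbe
          have hb1 := hind _ hv _ h1
          rw [pg_adj_xy] at hb1
          simp only [Fin.val_one] at hb1
          exact congrArg vX (Fin.ext (by omega))
        · exact Or.inl (congrArg vY (hyS i hv))
        · exact absurd hv (by intro hh; exact hzS k hh)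
      · rintro (rfl | rfl) <;> assumption
    rw [hSeq, Finset.card_insert_of_notMem (by simp), Finset.card_singleton]
  · -- y1 ∉ S : odd o ∈ S and its partner
    obtain ⟨u, hu, hadj⟩ := hdom (vY 1) hy1m h1
    rcases u with o | i | k
    · have ho : o.val % 2 = 1 := by rw [pg_adj_xy] at hadj; simpa using hadj
      have hom : o.val < n := by
        have := hsub hu; simpa [sB] using this
      have hbound := o.isLt
      set e : Fin (2*m) := ⟨o.val - 1, by omega⟩ with hedef
      have hem : (vX e : Fin (2*m) ⊕ Fin 2 ⊕ Fin 3) ∈ sB n := by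
        have hd : e.val = o.val - 1 := rfl
        simp only [sB, mem_mkSet_x]; omega
      have heS : (vX e : Fin (2*m) ⊕ Fin 2 ⊕ Fin 3) ∈ S := by
        by_contra heS
        obtain ⟨u', hu', hadj'⟩ := hdom (vX e) hem heS
        rcases u' with b | i | k
        · have hbo := hind _ hu' _ hu
          simp only [pg_adj_xx, ne_eq, not_not] at hbo
          rw [pg_adj_xx] at hadj'
          simp only [hedef] at hadj'
          exact hadj' (by omega)
        · have := hyS i hu'
          subst this
          exact h1 hu'
        · exact hzS k hu'
      have hSeq : S = {vX e, vX o} := by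
        ext v
        simp only [Finset.mem_insert, Finset.mem_singleton]
        constructor
        · intro hv
          rcases v with b | i | k
          · have hbo := hind _ hv _ hu
            simp only [pg_adj_xx, ne_eq, not_not] at hbo
            have hb : b.val % 2 = 0 ∨ b.val % 2 = 1 := by omega
            rcases hb with h | h
            · exact Or.inl (congrArg vX (Fin.ext (by simp only [hedef]; omega)))
            · exact Or.inr (congrArg vX (Fin.ext (by omega)))
          · exact absurd (by rw [hyS i hv] at hv; exact hv) h1
          · exact absurd hv (by intro hh; exact hzS k hh)
        · rintro (rfl | rfl) <;> assumption
      have hne : (vX e : Fin (2*m) ⊕ Fin 2 ⊕ Fin 3) ≠ vX o := by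
        simp only [ne_eq, Sum.inl.injEq]
        intro h
        have := congrArg Fin.val h
        simp only [hedef] at this
        omega
      rw [hSeq, Finset.card_insert_of_notMem (by simpa using hne), Finset.card_singleton]
    · exact absurd hadj pg_adj_yy
    · exact absurd hu (by intro hh; exact hzS k hh)

lemma card_sBg {t : ℕ} (ht : t < 2*m) {S : Finset (Fin (2*m) ⊕ Fin 2 ⊕ Fin 3)}
    (hS : IsMaxIndepIn (Pgraph m) (sBg t) S) : S.card = 2 := by
  rw [maxIndep_iff] at hS
  obtain ⟨⟨hsub, hind⟩, hdom⟩ := hS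
  have hy0m : (vY 0 : Fin (2*m) ⊕ Fin 2 ⊕ Fin 3) ∈ sBg t := by simp [sBg]
  have hyS : ∀ i : Fin 2, vY i ∈ S → i = 0 := by
    intro i hi
    have := hsub hi
    simp only [sBg, mem_mkSet_y] at this
    exact Fin.ext (by omega)
  have hzS : ∀ k : Fin 3, vZ k ∈ S → False := by
    intro k hk
    have := hsub hk
    simp [sBg] at this
  by_cases h0 : (vY 0 : Fin (2*m) ⊕ Fin 2 ⊕ Fin 3) ∈ S
  · -- y0 ∈ S; find an odd X-vertex of S
    have hEx : ∃ o : Fin (2*m), vX o ∈ S ∧ o.val % 2 = 1 := by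
      obtain ⟨n0, hodd, hge, hlt⟩ : ∃ n0, n0 % 2 = 1 ∧ t ≤ n0 ∧ n0 < 2*m := by
        rcases Nat.mod_two_eq_zero_or_one t with h | h
        · exact ⟨t+1, by omega, by omega, by omega⟩
        · exact ⟨t, h, le_refl t, ht⟩
      by_cases hxo : (vX ⟨n0, hlt⟩ : Fin (2*m) ⊕ Fin 2 ⊕ Fin 3) ∈ S
      · exact ⟨⟨n0, hlt⟩, hxo, hodd⟩
      · obtain ⟨u, hu, hadj⟩ := hdom (vX ⟨n0, hlt⟩)
          (by simp only [sBg, mem_mkSet_x]; exact hge) hxo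
        rcases u with b | i | k
        · refine ⟨b, hu, ?_⟩
          have hb0' := hind _ hu _ h0
          rw [pg_adj_xy] at hb0'
          simp only [Fin.val_zero] at hb0'
          omega
        · exfalso
          have := hyS i hu
          subst this
          rw [pg_adj_yx] at hadj
          have h2 : n0 % 2 = 0 := hadj
          omega
        · exact absurd hu (by intro hh; exact hzS k hh)
    obtain ⟨o, hoS, ho⟩ := hEx
    have hSeq : S = {vY 0, vX o} := by
      ext v
      simp only [Finset.mem_insert, Finset.mem_singleton]
      constructor
      · intro hv
        rcases v with b | i | k
        · right
          have hbo := hind _ hv _ hoS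
          simp only [pg_adj_xx, ne_eq, not_not] at hbo
          have hb0' := hind _ hv _ h0
          rw [pg_adj_xy] at hb0'
          simp only [Fin.val_zero] at hb0'
          exact congrArg vX (Fin.ext (by omega))
        · exact Or.inl (congrArg vY (hyS i hv))
        · exact absurd hv (by intro hh; exact hzS k hh)
      · rintro (rfl | rfl) <;> assumption
    rw [hSeq, Finset.card_insert_of_notMem (by simp), Finset.card_singleton]
  · -- y0 ∉ S : even e ∈ S and its partner above
    obtain ⟨u, hu, hadj⟩ := hdom (vY 0) hy0m h0
    rcases u with e | i | k
    · have he : e.val % 2 = 0 := by rw [pg_adj_xy] at hadj; simpa using hadj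
      have hem' : t ≤ e.val := by
        have := hsub hu; simpa [sBg] using this
      have hbound := e.isLt
      set o : Fin (2*m) := ⟨e.val + 1, by omega⟩ with hodef
      have hom : (vX o : Fin (2*m) ⊕ Fin 2 ⊕ Fin 3) ∈ sBg t := by
        have hd : o.val = e.val + 1 := rfl
        simp only [sBg, mem_mkSet_x]; omega
      have hoS : (vX o : Fin (2*m) ⊕ Fin 2 ⊕ Fin 3) ∈ S := by
        by_contra hoS
        obtain ⟨u', hu', hadj'⟩ := hdom (vX o) hom hoS
        rcases u' with b | i | k
        · have hbe := hind _ hu' _ hu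
          simp only [pg_adj_xx, ne_eq, not_not] at hbe
          rw [pg_adj_xx] at hadj'
          simp only [hodef] at hadj'
          exact hadj' (by omega)
        · have := hyS i hu'
          subst this
          exact h0 hu'
        · exact hzS k hu'
      have hSeq : S = {vX e, vX o} := by
        ext v
        simp only [Finset.mem_insert, Finset.mem_singleton]
        constructor
        · intro hv
          rcases v with b | i | k
          · have hbe := hind _ hv _ hu
            simp only [pg_adj_xx, ne_eq, not_not] at hbe
            have hb : b.val % 2 = 0 ∨ b.val % 2 = 1 := by omega
            rcases hb with h | h
            · exact Or.inl (congrArg vX (Fin.ext (by omega)))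
            · exact Or.inr (congrArg vX (Fin.ext (by simp only [hodef]; omega)))
          · exact absurd (by rw [hyS i hv] at hv; exact hv) h0
          · exact absurd hv (by intro hh; exact hzS k hh)
        · rintro (rfl | rfl) <;> assumption
      have hne : (vX e : Fin (2*m) ⊕ Fin 2 ⊕ Fin 3) ≠ vX o := by
        simp only [ne_eq, Sum.inl.injEq]
        intro h
        have := congrArg Fin.val h
        simp only [hodef] at this
        omega
      rw [hSeq, Finset.card_insert_of_notMem (by simpa using hne), Finset.card_singleton]
    · exact absurd hadj pg_adj_yy
    · exact absurd hu (by intro hh; exact hzS k hh)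

end Sets
section Chains

variable {m : ℕ}

lemma card_pair_le_two {α : Type*} [DecidableEq α] (u w : α) :
    ({u, w} : Finset α).card ≤ 2 :=
  (Finset.card_insert_le _ _).trans (by simp)

lemma vd_subset_pair {S : Finset (Fin (2*m) ⊕ Fin 2 ⊕ Fin 3)}
    (u w : Fin (2*m) ⊕ Fin 2 ⊕ Fin 3) (h : S ⊆ {u, w}) :
    VertexDecomposableOn (Pgraph m) S :=
  vd_of_card_le_two ((Finset.card_le_card h).trans (card_pair_le_two u w))

lemma vd_sD (hm : 1 ≤ m) : ∀ n, n ≤ 2*m → VertexDecomposableOn (Pgraph m) (sD (m := m) n) := by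
  intro n
  induction n with
  | zero =>
    intro _
    apply vd_of_no_edges
    intro u hu v hv
    rcases u with a | i | k
    · simp [sD] at hu
    · rcases v with b | j | l
      · simp [sD] at hv
      · exact pg_adj_yy
      · simp [sD] at hv
    · simp [sD] at hu
  | succ n ih =>
    intro hn
    have hlt : n < 2*m := by omega
    refine vd_step (vX ⟨n, hlt⟩) (by simp only [sD, mem_mkSet_x]; omega)
      (wc_of_card 2 (fun S hS => card_sD (by omega) (by omega) hS)) ?_ ?_
    · have hih := ih (by omega)
      convert hih using 2
      ext v
      rcases v with a | i | k
      · simp only [Finset.mem_erase, sD, mem_mkSet_x, ne_eq, Sum.inl.injEq, Fin.ext_iff]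
        omega
      · simp [Finset.mem_erase, sD]
      · simp [Finset.mem_erase, sD]
    · rcases Nat.mod_two_eq_zero_or_one n with hpar | hpar
      · -- n even : only y1 survives
        refine vd_subset_pair (vY 1) (vY 1) ?_
        intro v hv
        simp only [sD, mkSet_delN_x] at hv
        rcases v with a | i | k
        · rw [mem_mkSet_x] at hv
          obtain ⟨h1, h2, h3⟩ := hv
          have h2' : a.val ≠ n := fun hh => h2 (Fin.ext hh)
          exfalso; omega
        · rw [mem_mkSet_y] at hv
          obtain ⟨-, h⟩ := hv
          simp only [Finset.mem_insert, Finset.mem_singleton]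
          exact Or.inl (congrArg vY (Fin.ext (show i.val = 1 by omega)))
        · rw [mem_mkSet_z] at hv
          exact absurd hv (by simp)
      · -- n odd : x_{n-1} and y0 survive
        refine vd_subset_pair (vX ⟨n-1, by omega⟩) (vY 0) ?_
        intro v hv
        simp only [sD, mkSet_delN_x] at hv
        rcases v with a | i | k
        · rw [mem_mkSet_x] at hv
          obtain ⟨h1, h2, h3⟩ := hv
          have h2' : a.val ≠ n := fun hh => h2 (Fin.ext hh)
          simp only [Finset.mem_insert, Finset.mem_singleton]
          exact Or.inl (congrArg vX (Fin.ext (show a.val = n - 1 by omega)))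
        · rw [mem_mkSet_y] at hv
          obtain ⟨-, h⟩ := hv
          simp only [Finset.mem_insert, Finset.mem_singleton]
          exact Or.inr (congrArg vY (Fin.ext (show i.val = 0 by omega)))
        · rw [mem_mkSet_z] at hv
          exact absurd hv (by simp)

lemma vd_sB (hm : 1 ≤ m) : ∀ n, n ≤ 2*m → VertexDecomposableOn (Pgraph m) (sB (m := m) n) := by
  intro n
  induction n with
  | zero =>
    intro _
    apply vd_of_no_edges
    intro u hu v hv
    rcases u with a | i | k
    · simp [sB] at hu
    · rcases v with b | j | l
      · simp [sB] at hv
      · exact pg_adj_yy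
      · simp [sB] at hv
    · simp [sB] at hu
  | succ n ih =>
    intro hn
    have hlt : n < 2*m := by omega
    refine vd_step (vX ⟨n, hlt⟩) (by simp only [sB, mem_mkSet_x]; omega)
      (wc_of_card 2 (fun S hS => card_sB (by omega) (by omega) hS)) ?_ ?_
    · have hih := ih (by omega)
      convert hih using 2
      ext v
      rcases v with a | i | k
      · simp only [Finset.mem_erase, sB, mem_mkSet_x, ne_eq, Sum.inl.injEq, Fin.ext_iff]
        omega
      · simp [Finset.mem_erase, sB]
      · simp [Finset.mem_erase, sB]
    · refine vd_subset_pair (vX ⟨n-1, by omega⟩) (vY 1) ?_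
      intro v hv
      simp only [sB, mkSet_delN_x] at hv
      rcases v with a | i | k
      · rw [mem_mkSet_x] at hv
        obtain ⟨h1, h2, h3⟩ := hv
        have h2' : a.val ≠ n := fun hh => h2 (Fin.ext hh)
        simp only [Finset.mem_insert, Finset.mem_singleton]
        exact Or.inl (congrArg vX (Fin.ext (show a.val = n - 1 by omega)))
      · rw [mem_mkSet_y] at hv
        obtain ⟨h, -⟩ := hv
        simp only [Finset.mem_insert, Finset.mem_singleton]
        exact Or.inr (congrArg vY (Fin.ext (show i.val = 1 by omega)))
      · rw [mem_mkSet_z] at hv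
        exact absurd hv (by simp)

lemma vd_sBg (hm : 1 ≤ m) : ∀ j, j ≤ 2*m → VertexDecomposableOn (Pgraph m) (sBg (m := m) (2*m - j)) := by
  intro j
  induction j with
  | zero =>
    intro _
    apply vd_of_no_edges
    intro u hu v hv
    rcases u with a | i | k
    · simp only [sBg, mem_mkSet_x, Nat.sub_zero] at hu
      exact absurd hu (by have := a.isLt; omega)
    · rcases v with b | j' | l
      · simp only [sBg, mem_mkSet_x, Nat.sub_zero] at hv
        exact absurd hv (by have := b.isLt; omega)
      · exact pg_adj_yy
      · simp [sBg] at hv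
    · simp [sBg] at hu
  | succ j ih =>
    intro hj
    set t := 2*m - (j+1) with htdef
    have hlt : t < 2*m := by omega
    refine vd_step (vX ⟨t, hlt⟩) (by simp only [sBg, mem_mkSet_x]; omega)
      (wc_of_card 2 (fun S hS => card_sBg hlt hS)) ?_ ?_
    · have hih := ih (by omega)
      convert hih using 2
      ext v
      rcases v with a | i | k
      · simp only [Finset.mem_erase, sBg, mem_mkSet_x, ne_eq, Sum.inl.injEq, Fin.ext_iff]
        omega
      · simp [Finset.mem_erase, sBg]
      · simp [Finset.mem_erase, sBg]
    · refine vd_subset_pair (vX ⟨min (t+1) (2*m-1), by omega⟩) (vY 0) ?_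
      intro v hv
      simp only [sBg, mkSet_delN_x] at hv
      rcases v with a | i | k
      · rw [mem_mkSet_x] at hv
        obtain ⟨h1, h2, h3⟩ := hv
        have h2' : a.val ≠ t := fun hh => h2 (Fin.ext hh)
        have hab := a.isLt
        simp only [Finset.mem_insert, Finset.mem_singleton]
        exact Or.inl (congrArg vX (Fin.ext (show a.val = min (t+1) (2*m-1) by omega)))
      · rw [mem_mkSet_y] at hv
        obtain ⟨h, -⟩ := hv
        simp only [Finset.mem_insert, Finset.mem_singleton]
        exact Or.inr (congrArg vY (Fin.ext (show i.val = 0 by omega)))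
      · rw [mem_mkSet_z] at hv
        exact absurd hv (by simp)

end Chains
section Pos

variable {m : ℕ}

/-- `X ∪ Y ∪ {z₂}` -/
noncomputable def sF : Finset (Fin (2*m) ⊕ Fin 2 ⊕ Fin 3) :=
  mkSet (fun _ => True) (fun _ => True) (fun k => k.val = 2)

/-- `X ∪ Y ∪ {z₁, z₂}` (the graph minus `z₀`) -/
noncomputable def sA1 : Finset (Fin (2*m) ⊕ Fin 2 ⊕ Fin 3) :=
  mkSet (fun _ => True) (fun _ => True) (fun k => k.val ≠ 0)

/-- `X ∪ Y ∪ {z₀, z₂}` (the graph minus `z₁`) -/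
noncomputable def sA1' : Finset (Fin (2*m) ⊕ Fin 2 ⊕ Fin 3) :=
  mkSet (fun _ => True) (fun _ => True) (fun k => k.val ≠ 1)

lemma card_add_one_of_erase {α : Type*} {S : Finset α} {w : α} {c : ℕ}
    {inst : DecidableEq α} (hw : w ∈ S)
    (h : (@Finset.erase α inst S w).card = c) : S.card = c + 1 := by
  have h2 : (@Finset.erase α inst S w).card + 1 = S.card :=
    Finset.card_erase_add_one hw
  omega

lemma z_unique {S : Finset (Fin (2*m) ⊕ Fin 2 ⊕ Fin 3)}
    (hind : ∀ u ∈ S, ∀ v ∈ S, ¬ (Pgraph m).Adj u v) {w k : Fin 3}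
    (hw : vZ w ∈ S) (hk : vZ k ∈ S) : k = w := by
  by_contra hne
  exact hind _ hk _ hw (pg_adj_zz.2 hne)

lemma card_sF (hm : 1 ≤ m) {S : Finset (Fin (2*m) ⊕ Fin 2 ⊕ Fin 3)}
    (hS : IsMaxIndepIn (Pgraph m) sF S) : S.card = 3 := by
  obtain ⟨⟨hsub, hind⟩, hdom⟩ := maxIndep_iff.1 hS
  have hz2 : (vZ 2 : Fin (2*m) ⊕ Fin 2 ⊕ Fin 3) ∈ S := by
    by_contra h
    obtain ⟨u, hu, hadj⟩ := hdom (vZ 2) (by simp [sF]) h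
    rcases u with a | i | k
    · exact pg_adj_xz hadj
    · rw [pg_adj_yz] at hadj
      have := i.isLt; omega
    · have hk := hsub hu
      simp only [sF, mem_mkSet_z] at hk
      rw [pg_adj_zz] at hadj
      exact hadj (Fin.ext hk)
  have htr := max_transfer hz2 hS (B := sD (2*m))
    (fun v hv => by
      rcases v with a | i | k
      · simp [sF]
      · simp [sF]
      · simp [sD] at hv)
    (fun v hv hne => by
      rcases v with a | i | k
      · simp only [sD, mem_mkSet_x]; exact a.isLt
      · simp [sD]
      · exfalso
        have hk := hsub hv
        simp only [sF, mem_mkSet_z] at hk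
        exact hne (congrArg vZ (Fin.ext hk)))
    (by simp [sD])
    (fun v hv => by
      rcases v with a | i | k
      · exact pg_adj_zx
      · rw [pg_adj_zy]; have := i.isLt; omega
      · simp [sD] at hv)
  exact card_add_one_of_erase hz2 (card_sD (by omega) (le_refl _) htr)

lemma card_univ_max (hm : 1 ≤ m) {S : Finset (Fin (2*m) ⊕ Fin 2 ⊕ Fin 3)}
    (hS : IsMaxIndepIn (Pgraph m) Finset.univ S) : S.card = 3 := by
  obtain ⟨⟨hsub, hind⟩, hdom⟩ := maxIndep_iff.1 hS
  have hz : ∃ k : Fin 3, vZ k ∈ S := by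
    by_contra h
    push_neg at h
    obtain ⟨u, hu, hadj⟩ := hdom (vZ 2) (Finset.mem_univ _) (h 2)
    rcases u with a | i | k
    · exact pg_adj_xz hadj
    · rw [pg_adj_yz] at hadj
      have := i.isLt; omega
    · exact h k hu
  obtain ⟨w, hw⟩ := hz
  have hval : w.val = 0 ∨ w.val = 1 ∨ w.val = 2 := by have := w.isLt; omega
  rcases hval with hval | hval | hval
  · -- w = z0 : transfer to X ∪ {y1}
    have hw0 : (vZ 0 : Fin (2*m) ⊕ Fin 2 ⊕ Fin 3) ∈ S := by
      rwa [show w = (0 : Fin 3) from Fin.ext hval] at hw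
    have htr := max_transfer hw0 hS (B := sB (2*m))
      (fun v _ => Finset.mem_univ v)
      (fun v hv hne => by
        rcases v with a | i | k
        · simp only [sB, mem_mkSet_x]; exact a.isLt
        · simp only [sB, mem_mkSet_y]
          by_contra hi
          exact hind _ hv _ hw0 (pg_adj_yz.2 (by have := i.isLt; omega))
        · exact absurd (congrArg vZ (z_unique hind hw0 hv)) hne)
      (by simp [sB])
      (fun v hv => by
        rcases v with a | i | k
        · exact pg_adj_zx
        · rw [pg_adj_zy]
          simp only [sB, mem_mkSet_y] at hv
          omega
        · simp [sB] at hv)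
    exact card_add_one_of_erase hw0 (card_sB (by omega) (le_refl _) htr)
  · -- w = z1 : transfer to X ∪ {y0}
    have hw1 : (vZ 1 : Fin (2*m) ⊕ Fin 2 ⊕ Fin 3) ∈ S := by
      rwa [show w = (1 : Fin 3) from Fin.ext hval] at hw
    have htr := max_transfer hw1 hS (B := sBg 0)
      (fun v _ => Finset.mem_univ v)
      (fun v hv hne => by
        rcases v with a | i | k
        · simp only [sBg, mem_mkSet_x]; omega
        · simp only [sBg, mem_mkSet_y]
          by_contra hi
          exact hind _ hv _ hw1 (pg_adj_yz.2 (by have := i.isLt; omega))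
        · exact absurd (congrArg vZ (z_unique hind hw1 hv)) hne)
      (by simp [sBg])
      (fun v hv => by
        rcases v with a | i | k
        · exact pg_adj_zx
        · rw [pg_adj_zy]
          simp only [sBg, mem_mkSet_y] at hv
          omega
        · simp [sBg] at hv)
    exact card_add_one_of_erase hw1 (card_sBg (by omega) htr)
  · -- w = z2 : transfer to X ∪ Y
    have hw2 : (vZ 2 : Fin (2*m) ⊕ Fin 2 ⊕ Fin 3) ∈ S := by
      rwa [show w = (2 : Fin 3) from Fin.ext hval] at hw
    have htr := max_transfer hw2 hS (B := sD (2*m))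
      (fun v _ => Finset.mem_univ v)
      (fun v hv hne => by
        rcases v with a | i | k
        · simp only [sD, mem_mkSet_x]; exact a.isLt
        · simp [sD]
        · exact absurd (congrArg vZ (z_unique hind hw2 hv)) hne)
      (by simp [sD])
      (fun v hv => by
        rcases v with a | i | k
        · exact pg_adj_zx
        · rw [pg_adj_zy]; have := i.isLt; omega
        · simp [sD] at hv)
    exact card_add_one_of_erase hw2 (card_sD (by omega) (le_refl _) htr)

lemma card_sA1 (hm : 1 ≤ m) {S : Finset (Fin (2*m) ⊕ Fin 2 ⊕ Fin 3)}
    (hS : IsMaxIndepIn (Pgraph m) sA1 S) : S.card = 3 := by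
  obtain ⟨⟨hsub, hind⟩, hdom⟩ := maxIndep_iff.1 hS
  have hz : ∃ k : Fin 3, vZ k ∈ S := by
    by_contra h
    push_neg at h
    obtain ⟨u, hu, hadj⟩ := hdom (vZ 2) (by simp [sA1]) (h 2)
    rcases u with a | i | k
    · exact pg_adj_xz hadj
    · rw [pg_adj_yz] at hadj
      have := i.isLt; omega
    · exact h k hu
  obtain ⟨w, hw⟩ := hz
  have hwne : w.val ≠ 0 := by
    have := hsub hw; simpa [sA1] using this
  have hval : w.val = 1 ∨ w.val = 2 := by have := w.isLt; omega
  rcases hval with hval | hval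
  · have hw1 : (vZ 1 : Fin (2*m) ⊕ Fin 2 ⊕ Fin 3) ∈ S := by
      rwa [show w = (1 : Fin 3) from Fin.ext hval] at hw
    have htr := max_transfer hw1 hS (B := sBg 0)
      (fun v hv => by
        rcases v with a | i | k
        · simp [sA1]
        · simp [sA1]
        · simp [sBg] at hv)
      (fun v hv hne => by
        rcases v with a | i | k
        · simp only [sBg, mem_mkSet_x]; omega
        · simp only [sBg, mem_mkSet_y]
          by_contra hi
          exact hind _ hv _ hw1 (pg_adj_yz.2 (by have := i.isLt; omega))
        · exact absurd (congrArg vZ (z_unique hind hw1 hv)) hne)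
      (by simp [sBg])
      (fun v hv => by
        rcases v with a | i | k
        · exact pg_adj_zx
        · rw [pg_adj_zy]
          simp only [sBg, mem_mkSet_y] at hv
          omega
        · simp [sBg] at hv)
    exact card_add_one_of_erase hw1 (card_sBg (by omega) htr)
  · have hw2 : (vZ 2 : Fin (2*m) ⊕ Fin 2 ⊕ Fin 3) ∈ S := by
      rwa [show w = (2 : Fin 3) from Fin.ext hval] at hw
    have htr := max_transfer hw2 hS (B := sD (2*m))
      (fun v hv => by
        rcases v with a | i | k
        · simp [sA1]
        · simp [sA1]
        · simp [sD] at hv)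
      (fun v hv hne => by
        rcases v with a | i | k
        · simp only [sD, mem_mkSet_x]; exact a.isLt
        · simp [sD]
        · exact absurd (congrArg vZ (z_unique hind hw2 hv)) hne)
      (by simp [sD])
      (fun v hv => by
        rcases v with a | i | k
        · exact pg_adj_zx
        · rw [pg_adj_zy]; have := i.isLt; omega
        · simp [sD] at hv)
    exact card_add_one_of_erase hw2 (card_sD (by omega) (le_refl _) htr)

lemma card_sA1' (hm : 1 ≤ m) {S : Finset (Fin (2*m) ⊕ Fin 2 ⊕ Fin 3)}
    (hS : IsMaxIndepIn (Pgraph m) sA1' S) : S.card = 3 := by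
  obtain ⟨⟨hsub, hind⟩, hdom⟩ := maxIndep_iff.1 hS
  have hz : ∃ k : Fin 3, vZ k ∈ S := by
    by_contra h
    push_neg at h
    obtain ⟨u, hu, hadj⟩ := hdom (vZ 2) (by simp [sA1']) (h 2)
    rcases u with a | i | k
    · exact pg_adj_xz hadj
    · rw [pg_adj_yz] at hadj
      have := i.isLt; omega
    · exact h k hu
  obtain ⟨w, hw⟩ := hz
  have hwne : w.val ≠ 1 := by
    have := hsub hw; simpa [sA1'] using this
  have hval : w.val = 0 ∨ w.val = 2 := by have := w.isLt; omega
  rcases hval with hval | hval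
  · have hw0 : (vZ 0 : Fin (2*m) ⊕ Fin 2 ⊕ Fin 3) ∈ S := by
      rwa [show w = (0 : Fin 3) from Fin.ext hval] at hw
    have htr := max_transfer hw0 hS (B := sB (2*m))
      (fun v hv => by
        rcases v with a | i | k
        · simp [sA1']
        · simp [sA1']
        · simp [sB] at hv)
      (fun v hv hne => by
        rcases v with a | i | k
        · simp only [sB, mem_mkSet_x]; exact a.isLt
        · simp only [sB, mem_mkSet_y]
          by_contra hi
          exact hind _ hv _ hw0 (pg_adj_yz.2 (by have := i.isLt; omega))
        · exact absurd (congrArg vZ (z_unique hind hw0 hv)) hne)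
      (by simp [sB])
      (fun v hv => by
        rcases v with a | i | k
        · exact pg_adj_zx
        · rw [pg_adj_zy]
          simp only [sB, mem_mkSet_y] at hv
          omega
        · simp [sB] at hv)
    exact card_add_one_of_erase hw0 (card_sB (by omega) (le_refl _) htr)
  · have hw2 : (vZ 2 : Fin (2*m) ⊕ Fin 2 ⊕ Fin 3) ∈ S := by
      rwa [show w = (2 : Fin 3) from Fin.ext hval] at hw
    have htr := max_transfer hw2 hS (B := sD (2*m))
      (fun v hv => by
        rcases v with a | i | k
        · simp [sA1']
        · simp [sA1']
        · simp [sD] at hv)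
      (fun v hv hne => by
        rcases v with a | i | k
        · simp only [sD, mem_mkSet_x]; exact a.isLt
        · simp [sD]
        · exact absurd (congrArg vZ (z_unique hind hw2 hv)) hne)
      (by simp [sD])
      (fun v hv => by
        rcases v with a | i | k
        · exact pg_adj_zx
        · rw [pg_adj_zy]; have := i.isLt; omega
        · simp [sD] at hv)
    exact card_add_one_of_erase hw2 (card_sD (by omega) (le_refl _) htr)

lemma vd_sBg0 (hm : 1 ≤ m) : VertexDecomposableOn (Pgraph m) (sBg (m := m) 0) := by
  have := vd_sBg hm (2*m) (le_refl _)
  rwa [Nat.sub_self] at this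

lemma vd_sF (hm : 1 ≤ m) : VertexDecomposableOn (Pgraph m) (sF (m := m)) := by
  refine vd_step (vZ 2) (by simp [sF]) (wc_of_card 3 (fun S hS => card_sF hm hS)) ?_ ?_
  · convert vd_sD hm (2*m) (le_refl _) using 2
    ext v
    rcases v with a | i | k
    · simp [Finset.mem_erase, sF, sD, a.isLt]
    · simp [Finset.mem_erase, sF, sD]
    · simp only [Finset.mem_erase, sF, sD, mem_mkSet_z, ne_eq, Sum.inr.injEq, Fin.ext_iff,
        fin3_v2]
      exact ⟨fun h => absurd h.2 h.1, False.elim⟩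
  · have heq : delClosedNbhd (Pgraph m) (sF (m := m)) (vZ 2) = sD (m := m) (2*m) := by
      simp only [sF, mkSet_delN_z, sD]
      refine mkSet_congr (fun a => ?_) (fun i => ?_) (fun k => Iff.rfl)
      · simp [a.isLt]
      · have := i.isLt
        simp only [true_and, fin3_v2, ne_eq, iff_true]
        omega
    rw [heq]
    exact vd_sD hm (2*m) (le_refl _)

lemma vd_sA1 (hm : 1 ≤ m) : VertexDecomposableOn (Pgraph m) (sA1 (m := m)) := by
  refine vd_step (vZ 1) (by simp [sA1]) (wc_of_card 3 (fun S hS => card_sA1 hm hS)) ?_ ?_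
  · convert vd_sF hm using 2
    ext v
    rcases v with a | i | k
    · simp [Finset.mem_erase, sF, sA1]
    · simp [Finset.mem_erase, sF, sA1]
    · simp only [Finset.mem_erase, sF, sA1, mem_mkSet_z, ne_eq, Sum.inr.injEq, Fin.ext_iff,
        fin3_v1]
      have := k.isLt
      omega
  · have heq : delClosedNbhd (Pgraph m) (sA1 (m := m)) (vZ 1) = sBg (m := m) 0 := by
      simp only [sA1, mkSet_delN_z, sBg]
      refine mkSet_congr (fun a => by simp) (fun i => ?_) (fun k => by simp)
      have := i.isLt
      simp only [true_and, fin3_v1, ne_eq]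
      omega
    rw [heq]
    exact vd_sBg0 hm

lemma vd_sA1' (hm : 1 ≤ m) : VertexDecomposableOn (Pgraph m) (sA1' (m := m)) := by
  refine vd_step (vZ 0) (by simp [sA1']) (wc_of_card 3 (fun S hS => card_sA1' hm hS)) ?_ ?_
  · convert vd_sF hm using 2
    ext v
    rcases v with a | i | k
    · simp [Finset.mem_erase, sF, sA1']
    · simp [Finset.mem_erase, sF, sA1']
    · simp only [Finset.mem_erase, sF, sA1', mem_mkSet_z, ne_eq, Sum.inr.injEq, Fin.ext_iff,
        fin3_v0]
      have := k.isLt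
      omega
  · have heq : delClosedNbhd (Pgraph m) (sA1' (m := m)) (vZ 0) = sB (m := m) (2*m) := by
      simp only [sA1', mkSet_delN_z, sB]
      refine mkSet_congr (fun a => by simp [a.isLt]) (fun i => ?_) (fun k => by simp)
      have := i.isLt
      simp only [true_and, fin3_v0, ne_eq]
      omega
    rw [heq]
    exact vd_sB hm (2*m) (le_refl _)

lemma erase_univ_z0 {inst : DecidableEq (Fin (2*m) ⊕ Fin 2 ⊕ Fin 3)} :
    (@Finset.erase _ inst (Finset.univ : Finset (Fin (2*m) ⊕ Fin 2 ⊕ Fin 3)) (vZ 0)) = sA1 := by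
  ext v
  rcases v with a | i | k
  · simp [Finset.mem_erase, sA1]
  · simp [Finset.mem_erase, sA1]
  · simp only [Finset.mem_erase, Finset.mem_univ, and_true, sA1, mem_mkSet_z, ne_eq,
      Sum.inr.injEq, Fin.ext_iff, fin3_v0]

lemma erase_univ_z1 {inst : DecidableEq (Fin (2*m) ⊕ Fin 2 ⊕ Fin 3)} :
    (@Finset.erase _ inst (Finset.univ : Finset (Fin (2*m) ⊕ Fin 2 ⊕ Fin 3)) (vZ 1)) = sA1' := by
  ext v
  rcases v with a | i | k
  · simp [Finset.mem_erase, sA1']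
  · simp [Finset.mem_erase, sA1']
  · simp only [Finset.mem_erase, Finset.mem_univ, and_true, sA1', mem_mkSet_z, ne_eq,
      Sum.inr.injEq, Fin.ext_iff, fin3_v1]

lemma delN_univ_z0 (hm : 1 ≤ m) :
    delClosedNbhd (Pgraph m) (Finset.univ : Finset (Fin (2*m) ⊕ Fin 2 ⊕ Fin 3)) (vZ 0) =
      sB (m := m) (2*m) := by
  rw [univ_eq_mkSet, mkSet_delN_z]
  refine mkSet_congr (fun a => by simp [a.isLt]) (fun i => ?_) (fun k => by simp [sB])
  have := i.isLt
  simp only [true_and]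
  constructor
  · intro h; omega
  · intro h; omega

lemma delN_univ_z1 (hm : 1 ≤ m) :
    delClosedNbhd (Pgraph m) (Finset.univ : Finset (Fin (2*m) ⊕ Fin 2 ⊕ Fin 3)) (vZ 1) =
      sBg (m := m) 0 := by
  rw [univ_eq_mkSet, mkSet_delN_z]
  refine mkSet_congr (fun a => by simp) (fun i => ?_) (fun k => by simp [sBg])
  have := i.isLt
  simp only [true_and]
  constructor
  · intro h; omega
  · intro h; omega

lemma vd_univ (hm : 1 ≤ m) :
    VertexDecomposableOn (Pgraph m) (Finset.univ : Finset (Fin (2*m) ⊕ Fin 2 ⊕ Fin 3)) := by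
  refine vd_step (vZ 0) (Finset.mem_univ _) (wc_of_card 3 (fun S hS => card_univ_max hm hS))
    ?_ ?_
  · convert vd_sA1 hm using 2
    exact erase_univ_z0
  · rw [delN_univ_z0 hm]
    exact vd_sB hm (2*m) (le_refl _)

end Pos
section Neg1

variable {m : ℕ}

/-- the matching partner of an `X`-vertex -/
def pt (a : Fin (2*m)) : Fin (2*m) :=
  ⟨if a.val % 2 = 0 then a.val + 1 else a.val - 1, by have := a.isLt; split <;> omega⟩

lemma pt_val (a : Fin (2*m)) :
    (pt a).val = if a.val % 2 = 0 then a.val + 1 else a.val - 1 := rfl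

lemma pt_half (a : Fin (2*m)) : (pt a).val / 2 = a.val / 2 := by
  have := a.isLt
  have hp := pt_val a
  rcases Nat.mod_two_eq_zero_or_one a.val with h2 | h2
  · rw [if_pos h2] at hp; omega
  · rw [if_neg (by omega)] at hp; omega

lemma pt_ne (a : Fin (2*m)) : pt a ≠ a := by
  intro h
  have h2 := congrArg Fin.val h
  rw [pt_val] at h2
  rcases Nat.mod_two_eq_zero_or_one a.val with h3 | h3
  · rw [if_pos h3] at h2; omega
  · rw [if_neg (by omega)] at h2; omega

lemma pt_parity (a : Fin (2*m)) : (pt a).val % 2 ≠ a.val % 2 := by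
  have := a.isLt
  have hp := pt_val a
  rcases Nat.mod_two_eq_zero_or_one a.val with h2 | h2
  · rw [if_pos h2] at hp; omega
  · rw [if_neg (by omega)] at hp; omega

lemma eq_or_pt {a b : Fin (2*m)} (h : b.val/2 = a.val/2) : b = a ∨ b = pt a := by
  have ha := a.isLt
  have hb := b.isLt
  have hp := pt_val a
  rcases Nat.mod_two_eq_zero_or_one a.val with h2 | h2
  · rw [if_pos h2] at hp
    have : b.val = a.val ∨ b.val = (pt a).val := by omega
    rcases this with h3 | h3
    exacts [Or.inl (Fin.ext h3), Or.inr (Fin.ext h3)]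
  · rw [if_neg (by omega)] at hp
    have : b.val = a.val ∨ b.val = (pt a).val := by omega
    rcases this with h3 | h3
    exacts [Or.inl (Fin.ext h3), Or.inr (Fin.ext h3)]

lemma not_adj_pt (a : Fin (2*m)) : ¬ (Pgraph m).Adj (vX (pt a)) (vX a) := by
  rw [pg_adj_xx, ne_eq, not_not]
  exact pt_half a

/-- an explicitly-given pair avoiding a given vertex (needs `m ≥ 2`) -/
lemma avoid_pair (hm : 2 ≤ m) (j : Fin (2*m)) :
    ∃ e o : Fin (2*m), e.val % 2 = 0 ∧ o.val = e.val + 1 ∧ e ≠ j ∧ o ≠ j := by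
  by_cases h : j.val < 2
  · refine ⟨⟨2, by omega⟩, ⟨3, by omega⟩, ?_, ?_, ?_, ?_⟩
    · show 2 % 2 = 0; omega
    · show (3:ℕ) = 2 + 1; omega
    · intro hh; have h3 : (2:ℕ) = j.val := congrArg Fin.val hh; omega
    · intro hh; have h3 : (3:ℕ) = j.val := congrArg Fin.val hh; omega
  · refine ⟨⟨0, by omega⟩, ⟨1, by omega⟩, ?_, ?_, ?_, ?_⟩
    · show 0 % 2 = 0; omega
    · show (1:ℕ) = 0 + 1; omega
    · intro hh; have h3 : (0:ℕ) = j.val := congrArg Fin.val hh; omega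
    · intro hh; have h3 : (1:ℕ) = j.val := congrArg Fin.val hh; omega

lemma card2_ne {α : Type*} [DecidableEq α] {u w : α} (h : u ≠ w) :
    ({u, w} : Finset α).card = 2 := by
  rw [Finset.card_insert_of_notMem (by simpa using h), Finset.card_singleton]

lemma card3_xxz (e o : Fin (2*m)) (h : e ≠ o) (w : Fin 3) :
    ({vX e, vX o, vZ w} : Finset (Fin (2*m) ⊕ Fin 2 ⊕ Fin 3)).card = 3 := by
  rw [Finset.card_insert_of_notMem (by simp [h]), Finset.card_insert_of_notMem (by simp),
    Finset.card_singleton]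

/-- A full pair together with any `z`-vertex is a maximal independent set in any
ambient set containing it. -/
lemma maxT3 {A : Finset (Fin (2*m) ⊕ Fin 2 ⊕ Fin 3)} (e o : Fin (2*m))
    (he : e.val % 2 = 0) (ho : o.val = e.val + 1) (w : Fin 3)
    (h1 : vX e ∈ A) (h2 : vX o ∈ A) (h3 : vZ w ∈ A) :
    IsMaxIndepIn (Pgraph m) A {vX e, vX o, vZ w} := by
  rw [maxIndep_iff]
  refine ⟨⟨?_, ?_⟩, ?_⟩
  · intro v hv
    simp only [Finset.mem_insert, Finset.mem_singleton] at hv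
    rcases hv with rfl | rfl | rfl <;> assumption
  · intro u hu v hv
    simp only [Finset.mem_insert, Finset.mem_singleton] at hu hv
    rcases hu with rfl | rfl | rfl <;> rcases hv with rfl | rfl | rfl
    · exact (Pgraph m).irrefl
    · simp only [pg_adj_xx, ne_eq, not_not]; omega
    · exact pg_adj_xz
    · simp only [pg_adj_xx, ne_eq, not_not]; omega
    · exact (Pgraph m).irrefl
    · exact pg_adj_xz
    · exact pg_adj_zx
    · exact pg_adj_zx
    · exact (Pgraph m).irrefl
  · intro v hvA hvS
    simp only [Finset.mem_insert, Finset.mem_singleton, not_or] at hvS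
    obtain ⟨hv1, hv2, hv3⟩ := hvS
    rcases v with b | i | l
    · refine ⟨vX e, by simp, ?_⟩
      rw [pg_adj_xx]
      intro hh
      have hbo := o.isLt
      rcases (show b.val = e.val ∨ b.val = o.val by have := b.isLt; omega) with h | h
      · exact hv1 (congrArg vX (Fin.ext h))
      · exact hv2 (congrArg vX (Fin.ext h))
    · rcases (show i.val = 0 ∨ i.val = 1 by have := i.isLt; omega) with h | h
      · exact ⟨vX e, by simp, by rw [pg_adj_xy]; omega⟩
      · exact ⟨vX o, by simp, by rw [pg_adj_xy]; omega⟩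
    · refine ⟨vZ w, by simp, ?_⟩
      rw [pg_adj_zz]
      exact fun hh => hv3 (congrArg vZ hh.symm)

/-- A full pair is a maximal independent set in any ambient subset of `X`. -/
lemma maxT2X {px : Fin (2*m) → Prop} (e o : Fin (2*m))
    (he : e.val % 2 = 0) (ho : o.val = e.val + 1)
    (h1 : vX e ∈ mkSet px (fun _ => False) (fun _ => (False : Prop)))
    (h2 : vX o ∈ mkSet px (fun _ => False) (fun _ => (False : Prop))) :
    IsMaxIndepIn (Pgraph m) (mkSet px (fun _ => False) (fun _ => (False : Prop)))
      {vX e, vX o} := by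
  rw [maxIndep_iff]
  refine ⟨⟨?_, ?_⟩, ?_⟩
  · intro v hv
    simp only [Finset.mem_insert, Finset.mem_singleton] at hv
    rcases hv with rfl | rfl <;> assumption
  · intro u hu v hv
    simp only [Finset.mem_insert, Finset.mem_singleton] at hu hv
    rcases hu with rfl | rfl <;> rcases hv with rfl | rfl
    · exact (Pgraph m).irrefl
    · simp only [pg_adj_xx, ne_eq, not_not]; omega
    · simp only [pg_adj_xx, ne_eq, not_not]; omega
    · exact (Pgraph m).irrefl
  · intro v hvA hvS
    simp only [Finset.mem_insert, Finset.mem_singleton, not_or] at hvS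
    obtain ⟨hv1, hv2⟩ := hvS
    rcases v with b | i | l
    · refine ⟨vX e, by simp, ?_⟩
      rw [pg_adj_xx]
      intro hh
      have hbo := o.isLt
      rcases (show b.val = e.val ∨ b.val = o.val by have := b.isLt; omega) with h | h
      · exact hv1 (congrArg vX (Fin.ext h))
      · exact hv2 (congrArg vX (Fin.ext h))
    · simp [mem_mkSet_y] at hvA
    · simp [mem_mkSet_z] at hvA

/-- `X` alone -/
noncomputable def sX : Finset (Fin (2*m) ⊕ Fin 2 ⊕ Fin 3) :=
  mkSet (fun _ => True) (fun _ => False) (fun _ => False)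

lemma not_vd_sX (hm : 2 ≤ m) : ¬ VertexDecomposableOn (Pgraph m) (sX (m := m)) := by
  intro h
  rw [VertexDecomposableOn] at h
  obtain ⟨-, h⟩ := h
  rcases h with hne | ⟨x, hx, h1, h2⟩
  · exact hne (vX ⟨0, by omega⟩) (by simp [sX]) (vX ⟨2, by omega⟩) (by simp [sX])
      (by rw [pg_adj_xx]; show (0:ℕ)/2 ≠ (2:ℕ)/2; omega)
  · rcases x with j | i | l
    · -- deleting any x leaves its partner as an isolated-in-independence vertex
      rw [sX, mkSet_erase_x] at h1
      obtain ⟨e, o, he, ho, hej, hoj⟩ := avoid_pair hm j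
      refine not_vd_of_maxIndep (S := {vX (pt j)})
        (T := {vX e, vX o}) ?_ ?_ (by
          rw [Finset.card_singleton, card2_ne (by
            intro hh
            simp only [Sum.inl.injEq] at hh
            have := congrArg Fin.val hh
            omega)]
          omega) h1
      · rw [maxIndep_iff]
        refine ⟨⟨?_, ?_⟩, ?_⟩
        · intro v hv
          simp only [Finset.mem_singleton] at hv
          subst hv
          simp only [mem_mkSet_x]
          exact ⟨trivial, pt_ne j⟩
        · intro u hu v hv
          simp only [Finset.mem_singleton] at hu hv
          subst hu; subst hv
          exact (Pgraph m).irrefl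
        · intro v hvA hvS
          simp only [Finset.mem_singleton] at hvS
          rcases v with b | i | l
          · refine ⟨vX (pt j), by simp, ?_⟩
            rw [pg_adj_xx]
            intro hh
            rw [pt_half] at hh
            rcases eq_or_pt hh.symm with h | h
            · simp only [mem_mkSet_x] at hvA
              exact hvA.2 h
            · exact hvS (congrArg vX h)
          · simp [mem_mkSet_y] at hvA
          · simp [mem_mkSet_z] at hvA
      · refine maxT2X e o he ho ?_ ?_ <;> simp [hej, hoj]
    · simp [sX] at hx
    · -- the z-case is impossible since z ∉ sX
      simp [sX] at hx

/-- deleting the closed neighbourhood of a `z`-vertex whose `y`-neighbour condition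
holds leaves exactly `X`. -/
lemma delN_z_to_sX {py : Fin 2 → Prop} {pz : Fin 3 → Prop} (j : Fin 3)
    (hy : ∀ i : Fin 2, py i → i.val = j.val) :
    delClosedNbhd (Pgraph m) (mkSet (fun _ => True) py pz) (vZ j) = sX := by
  rw [mkSet_delN_z, sX]
  exact mkSet_congr (fun a => Iff.rfl)
    (fun i => ⟨fun h => absurd (hy i h.1) h.2, False.elim⟩) (fun k => Iff.rfl)

/-- `X` together with at least two `z`-vertices (and no `y`) is not vertex decomposable. -/
lemma not_vd_XZ (hm : 2 ≤ m) {pz : Fin 3 → Prop} (c1 c2 : Fin 3) (hcc : c1 ≠ c2)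
    (hc1 : pz c1) (hc2 : pz c2) :
    ¬ VertexDecomposableOn (Pgraph m) (mkSet (fun _ => True) (fun _ => False) pz) := by
  intro h
  rw [VertexDecomposableOn] at h
  obtain ⟨-, h⟩ := h
  rcases h with hne | ⟨x, hx, h1, h2⟩
  · exact hne (vZ c1) (by simpa using hc1) (vZ c2) (by simpa using hc2)
      (pg_adj_zz.2 hcc)
  · rcases x with j | i | l
    · rw [mkSet_erase_x] at h1
      obtain ⟨e, o, he, ho, hej, hoj⟩ := avoid_pair hm j
      refine not_vd_of_maxIndep (S := {vX (pt j), vZ c1})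
        (T := {vX e, vX o, vZ c2}) ?_ ?_ ?_ h1
      · rw [maxIndep_iff]
        refine ⟨⟨?_, ?_⟩, ?_⟩
        · intro v hv
          simp only [Finset.mem_insert, Finset.mem_singleton] at hv
          rcases hv with rfl | rfl
          · simp only [mem_mkSet_x]
            exact ⟨trivial, pt_ne j⟩
          · simpa using hc1
        · intro u hu v hv
          simp only [Finset.mem_insert, Finset.mem_singleton] at hu hv
          rcases hu with rfl | rfl <;> rcases hv with rfl | rfl
          · exact (Pgraph m).irrefl
          · exact pg_adj_xz
          · exact pg_adj_zx
          · exact (Pgraph m).irrefl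
        · intro v hvA hvS
          simp only [Finset.mem_insert, Finset.mem_singleton, not_or] at hvS
          obtain ⟨hv1, hv2⟩ := hvS
          rcases v with b | i | l
          · refine ⟨vX (pt j), by simp, ?_⟩
            rw [pg_adj_xx]
            intro hh
            rw [pt_half] at hh
            rcases eq_or_pt hh.symm with h | h
            · simp only [mem_mkSet_x] at hvA
              exact hvA.2 h
            · exact hv1 (congrArg vX h)
          · simp [mem_mkSet_y] at hvA
          · refine ⟨vZ c1, by simp, ?_⟩
            rw [pg_adj_zz]
            exact fun hh => hv2 (congrArg vZ hh.symm)
      · refine maxT3 e o he ho c2 ?_ ?_ ?_ <;> simp [hej, hoj, hc2]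
      · rw [card2_ne (by simp), card3_xxz e o (by
          intro hh
          have := congrArg Fin.val hh
          omega) c2]
        omega
    · simp at hx
    · rw [delN_z_to_sX l (fun i hi => hi.elim)] at h2
      exact not_vd_sX hm h2

end Neg1
section Neg2

variable {m : ℕ}

lemma not_wc_Xy1z1 (hm : 2 ≤ m) :
    ¬ WellCoveredOn (Pgraph m)
      (mkSet (fun _ => True) (fun i => i.val = 1) (fun k => k.val = 1)) := by
  intro hwc
  have hS : IsMaxIndepIn (Pgraph m)
      (mkSet (fun _ => True) (fun i => i.val = 1) (fun k => k.val = 1))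
      {vY 1, vX ⟨0, by omega⟩} := by
    rw [maxIndep_iff]
    refine ⟨⟨?_, ?_⟩, ?_⟩
    · intro v hv
      simp only [Finset.mem_insert, Finset.mem_singleton] at hv
      rcases hv with rfl | rfl <;> simp
    · intro u hu v hv
      simp only [Finset.mem_insert, Finset.mem_singleton] at hu hv
      rcases hu with rfl | rfl <;> rcases hv with rfl | rfl
      · exact pg_adj_yy
      · rw [pg_adj_yx]; show ¬(0 % 2 = 1); omega
      · rw [pg_adj_xy]; show ¬(0 % 2 = 1); omega
      · exact (Pgraph m).irrefl
    · intro v hvA hvS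
      simp only [Finset.mem_insert, Finset.mem_singleton, not_or] at hvS
      obtain ⟨hv1, hv2⟩ := hvS
      rcases v with b | i | l
      · by_cases hb : b.val / 2 = 0
        · have : b.val = 0 ∨ b.val = 1 := by omega
          rcases this with h | h
          · exact absurd (congrArg vX (Fin.ext h)) hv2
          · exact ⟨vY 1, by simp, by rw [pg_adj_yx]; omega⟩
        · exact ⟨vX ⟨0, by omega⟩, by simp, by
            rw [pg_adj_xx]; show ¬((0:ℕ)/2 = b.val/2); omega⟩
      · simp only [mem_mkSet_y] at hvA
        exact absurd (congrArg vY (Fin.ext (by omega))) hv1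
      · simp only [mem_mkSet_z] at hvA
        exact ⟨vY 1, by simp, by rw [pg_adj_yz]; omega⟩
  obtain ⟨e, o, he, ho, hej, hoj⟩ := avoid_pair hm ⟨0, by omega⟩
  have hT := maxT3 (A := mkSet (fun _ => True) (fun i => i.val = 1) (fun k => k.val = 1))
    e o he ho 1 (by simp) (by simp) (by simp)
  have h := hwc _ _ hS hT
  rw [card2_ne (by simp), card3_xxz e o (by
    intro hh; have h3 := congrArg Fin.val hh; omega) 1] at h
  omega

lemma not_wc_Xy0z0 (hm : 2 ≤ m) :
    ¬ WellCoveredOn (Pgraph m)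
      (mkSet (fun _ => True) (fun i => i.val = 0) (fun k => k.val = 0)) := by
  intro hwc
  have hS : IsMaxIndepIn (Pgraph m)
      (mkSet (fun _ => True) (fun i => i.val = 0) (fun k => k.val = 0))
      {vY 0, vX ⟨1, by omega⟩} := by
    rw [maxIndep_iff]
    refine ⟨⟨?_, ?_⟩, ?_⟩
    · intro v hv
      simp only [Finset.mem_insert, Finset.mem_singleton] at hv
      rcases hv with rfl | rfl <;> simp
    · intro u hu v hv
      simp only [Finset.mem_insert, Finset.mem_singleton] at hu hv
      rcases hu with rfl | rfl <;> rcases hv with rfl | rfl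
      · exact pg_adj_yy
      · rw [pg_adj_yx]; show ¬(1 % 2 = 0); omega
      · rw [pg_adj_xy]; show ¬(1 % 2 = 0); omega
      · exact (Pgraph m).irrefl
    · intro v hvA hvS
      simp only [Finset.mem_insert, Finset.mem_singleton, not_or] at hvS
      obtain ⟨hv1, hv2⟩ := hvS
      rcases v with b | i | l
      · by_cases hb : b.val / 2 = 0
        · have : b.val = 0 ∨ b.val = 1 := by omega
          rcases this with h | h
          · exact ⟨vY 0, by simp, by rw [pg_adj_yx]; omega⟩
          · exact absurd (congrArg vX (Fin.ext h)) hv2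
        · exact ⟨vX ⟨1, by omega⟩, by simp, by
            rw [pg_adj_xx]; show ¬((1:ℕ)/2 = b.val/2); omega⟩
      · simp only [mem_mkSet_y] at hvA
        exact absurd (congrArg vY (Fin.ext (by omega))) hv1
      · simp only [mem_mkSet_z] at hvA
        exact ⟨vY 0, by simp, by rw [pg_adj_yz]; omega⟩
  obtain ⟨e, o, he, ho, hej, hoj⟩ := avoid_pair hm ⟨0, by omega⟩
  have hT := maxT3 (A := mkSet (fun _ => True) (fun i => i.val = 0) (fun k => k.val = 0))
    e o he ho 0 (by simp) (by simp) (by simp)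
  have h := hwc _ _ hS hT
  rw [card2_ne (by simp), card3_xxz e o (by
    intro hh; have h3 := congrArg Fin.val hh; omega) 0] at h
  omega

/-- maximality of `{partner j, z_c}` in ambient sets (minus `x_j`) where every present
`y` is adjacent to `z_c` and every present `z ≠ z_c` as well. -/
lemma maxS_ptz {py : Fin 2 → Prop} {pz : Fin 3 → Prop} (j : Fin (2*m)) (c : Fin 3)
    (hc : pz c) (hy : ∀ i : Fin 2, py i → i.val = c.val) :
    IsMaxIndepIn (Pgraph m)
      (mkSet (fun a => True ∧ a ≠ j) py pz) {vX (pt j), vZ c} := by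
  rw [maxIndep_iff]
  refine ⟨⟨?_, ?_⟩, ?_⟩
  · intro v hv
    simp only [Finset.mem_insert, Finset.mem_singleton] at hv
    rcases hv with rfl | rfl
    · simp only [mem_mkSet_x]
      exact ⟨trivial, pt_ne j⟩
    · simpa using hc
  · intro u hu v hv
    simp only [Finset.mem_insert, Finset.mem_singleton] at hu hv
    rcases hu with rfl | rfl <;> rcases hv with rfl | rfl
    · exact (Pgraph m).irrefl
    · exact pg_adj_xz
    · exact pg_adj_zx
    · exact (Pgraph m).irrefl
  · intro v hvA hvS
    simp only [Finset.mem_insert, Finset.mem_singleton, not_or] at hvS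
    obtain ⟨hv1, hv2⟩ := hvS
    rcases v with b | i | l
    · refine ⟨vX (pt j), by simp, ?_⟩
      rw [pg_adj_xx]
      intro hh
      rw [pt_half] at hh
      rcases eq_or_pt hh.symm with h | h
      · simp only [mem_mkSet_x] at hvA
        exact hvA.2 h
      · exact hv1 (congrArg vX h)
    · refine ⟨vZ c, by simp, ?_⟩
      rw [pg_adj_zy]
      simp only [mem_mkSet_y] at hvA
      exact (hy i hvA).trans rfl
    · refine ⟨vZ c, by simp, ?_⟩
      rw [pg_adj_zz]
      exact fun hh => hv2 (congrArg vZ hh.symm)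

/-- `X ∪ {y₁} ∪ {z₁, w}` is not vertex decomposable. -/
lemma not_vd_Xy1z1w (hm : 2 ≤ m) (c : Fin 3) (hc : c.val = 0 ∨ c.val = 2) :
    ¬ VertexDecomposableOn (Pgraph m)
      (mkSet (fun _ => True) (fun i => i.val = 1) (fun k => k.val ≠ c.val)) := by
  intro h
  rw [VertexDecomposableOn] at h
  obtain ⟨-, h⟩ := h
  rcases h with hne | ⟨x, hx, h1, h2⟩
  · exact hne (vY 1) (by simp) (vZ 1) (by simp; omega)
      (by rw [pg_adj_yz]; simp)
  · rcases x with j | i | l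
    · rw [mkSet_erase_x] at h1
      obtain ⟨e, o, he, ho, hej, hoj⟩ := avoid_pair hm j
      refine not_vd_of_maxIndep
        (maxS_ptz j 1 (by simp; omega) (fun i hi => by rw [fin3_v1]; exact hi))
        (maxT3 e o he ho 1 (by simp [hej]) (by simp [hoj]) (by simp; omega))
        ?_ h1
      rw [card2_ne (by simp), card3_xxz e o (by
        intro hh; have := congrArg Fin.val hh; omega) 1]
      omega
    · rw [mkSet_erase_y] at h1
      have heq : mkSet (m := m) (fun _ => True) (fun i' => i'.val = 1 ∧ i' ≠ i)
          (fun k => k.val ≠ c.val) =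
          mkSet (fun _ => True) (fun _ => False) (fun k => k.val ≠ c.val) := by
        refine mkSet_congr (fun a => Iff.rfl) (fun i' => ?_) (fun k => Iff.rfl)
        simp only [mem_mkSet_y] at hx
        constructor
        · rintro ⟨h1', h2'⟩
          exact h2' (Fin.ext (by omega))
        · exact False.elim
      rw [heq] at h1
      rcases hc with hc0 | hc2
      · exact not_vd_XZ hm 1 2 (by intro hh; have := congrArg Fin.val hh; simp at this)
          (by omega) (by omega) h1
      · exact not_vd_XZ hm 0 1 (by intro hh; have := congrArg Fin.val hh; simp at this)
          (by omega) (by omega) h1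
    · simp only [mem_mkSet_z] at hx
      by_cases hl : l.val = 1
      · rw [delN_z_to_sX l (fun i hi => by omega)] at h2
        exact not_vd_sX hm h2
      · rw [mkSet_erase_z] at h1
        have heq : mkSet (m := m) (fun _ => True) (fun i => i.val = 1)
            (fun k => (k.val ≠ c.val) ∧ k ≠ l) =
            mkSet (fun _ => True) (fun i => i.val = 1) (fun k => k.val = 1) := by
          refine mkSet_congr (fun a => Iff.rfl) (fun i => Iff.rfl) (fun k => ?_)
          have hkb := k.isLt
          have hlb := l.isLt
          have hcb := c.isLt
          simp only [ne_eq, Fin.ext_iff]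
          constructor
          · rintro ⟨h1', h2'⟩; omega
          · intro hk1; constructor <;> omega
        rw [heq] at h1
        exact not_wc_Xy1z1 hm (vd_wc h1)

/-- `X ∪ {y₀} ∪ {z₀, w}` is not vertex decomposable. -/
lemma not_vd_Xy0z0w (hm : 2 ≤ m) (c : Fin 3) (hc : c.val = 1 ∨ c.val = 2) :
    ¬ VertexDecomposableOn (Pgraph m)
      (mkSet (fun _ => True) (fun i => i.val = 0) (fun k => k.val ≠ c.val)) := by
  intro h
  rw [VertexDecomposableOn] at h
  obtain ⟨-, h⟩ := h
  rcases h with hne | ⟨x, hx, h1, h2⟩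
  · exact hne (vY 0) (by simp) (vZ 0) (by simp; omega)
      (by rw [pg_adj_yz]; simp)
  · rcases x with j | i | l
    · rw [mkSet_erase_x] at h1
      obtain ⟨e, o, he, ho, hej, hoj⟩ := avoid_pair hm j
      refine not_vd_of_maxIndep
        (maxS_ptz j 0 (by simp; omega) (fun i hi => by rw [fin3_v0]; exact hi))
        (maxT3 e o he ho 0 (by simp [hej]) (by simp [hoj]) (by simp; omega))
        ?_ h1
      rw [card2_ne (by simp), card3_xxz e o (by
        intro hh; have := congrArg Fin.val hh; omega) 0]
      omega
    · rw [mkSet_erase_y] at h1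
      have heq : mkSet (m := m) (fun _ => True) (fun i' => i'.val = 0 ∧ i' ≠ i)
          (fun k => k.val ≠ c.val) =
          mkSet (fun _ => True) (fun _ => False) (fun k => k.val ≠ c.val) := by
        refine mkSet_congr (fun a => Iff.rfl) (fun i' => ?_) (fun k => Iff.rfl)
        simp only [mem_mkSet_y] at hx
        constructor
        · rintro ⟨h1', h2'⟩
          exact h2' (Fin.ext (by omega))
        · exact False.elim
      rw [heq] at h1
      rcases hc with hc1 | hc2
      · exact not_vd_XZ hm 0 2 (by intro hh; have := congrArg Fin.val hh; simp at this)
          (by omega) (by omega) h1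
      · exact not_vd_XZ hm 0 1 (by intro hh; have := congrArg Fin.val hh; simp at this)
          (by omega) (by omega) h1
    · simp only [mem_mkSet_z] at hx
      by_cases hl : l.val = 0
      · rw [delN_z_to_sX l (fun i hi => by omega)] at h2
        exact not_vd_sX hm h2
      · rw [mkSet_erase_z] at h1
        have heq : mkSet (m := m) (fun _ => True) (fun i => i.val = 0)
            (fun k => (k.val ≠ c.val) ∧ k ≠ l) =
            mkSet (fun _ => True) (fun i => i.val = 0) (fun k => k.val = 0) := by
          refine mkSet_congr (fun a => Iff.rfl) (fun i => Iff.rfl) (fun k => ?_)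
          have hkb := k.isLt
          have hlb := l.isLt
          have hcb := c.isLt
          simp only [ne_eq, Fin.ext_iff]
          constructor
          · rintro ⟨h1', h2'⟩; omega
          · intro hk1; constructor <;> omega
        rw [heq] at h1
        exact not_wc_Xy0z0 hm (vd_wc h1)

/-- `X ∪ {y₁} ∪ Z` (the graph minus `y₀`) is not vertex decomposable. -/
lemma not_vd_sA2 (hm : 2 ≤ m) :
    ¬ VertexDecomposableOn (Pgraph m)
      (mkSet (fun _ => True) (fun i => i.val = 1) (fun _ => True)) := by
  intro h
  rw [VertexDecomposableOn] at h
  obtain ⟨-, h⟩ := h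
  rcases h with hne | ⟨x, hx, h1, h2⟩
  · exact hne (vZ 0) (by simp) (vZ 1) (by simp)
      (pg_adj_zz.2 (by intro hh; have := congrArg Fin.val hh; simp at this))
  · rcases x with j | i | l
    · rw [mkSet_erase_x] at h1
      obtain ⟨e, o, he, ho, hej, hoj⟩ := avoid_pair hm j
      refine not_vd_of_maxIndep
        (maxS_ptz j 1 trivial (fun i hi => by rw [fin3_v1]; exact hi))
        (maxT3 e o he ho 1 (by simp [hej]) (by simp [hoj]) (by simp))
        ?_ h1
      rw [card2_ne (by simp), card3_xxz e o (by
        intro hh; have := congrArg Fin.val hh; omega) 1]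
      omega
    · rw [mkSet_erase_y] at h1
      have heq : mkSet (m := m) (fun _ => True) (fun i' => i'.val = 1 ∧ i' ≠ i)
          (fun _ => True) =
          mkSet (fun _ => True) (fun _ => False) (fun _ => True) := by
        refine mkSet_congr (fun a => Iff.rfl) (fun i' => ?_) (fun k => Iff.rfl)
        simp only [mem_mkSet_y] at hx
        constructor
        · rintro ⟨h1', h2'⟩
          exact h2' (Fin.ext (by omega))
        · exact False.elim
      rw [heq] at h1
      exact not_vd_XZ hm 0 1 (by intro hh; have := congrArg Fin.val hh; simp at this)
        trivial trivial h1
    · by_cases hl : l.val = 1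
      · rw [delN_z_to_sX l (fun i hi => by omega)] at h2
        exact not_vd_sX hm h2
      · rw [mkSet_erase_z] at h1
        have heq : mkSet (m := m) (fun _ => True) (fun i => i.val = 1)
            (fun k => True ∧ k ≠ l) =
            mkSet (fun _ => True) (fun i => i.val = 1) (fun k => k.val ≠ l.val) := by
          refine mkSet_congr (fun a => Iff.rfl) (fun i => Iff.rfl) (fun k => ?_)
          simp only [true_and, ne_eq, Fin.ext_iff]
        rw [heq] at h1
        exact not_vd_Xy1z1w hm l (by have := l.isLt; omega) h1

/-- `X ∪ {y₀} ∪ Z` (the graph minus `y₁`) is not vertex decomposable. -/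
lemma not_vd_sA2' (hm : 2 ≤ m) :
    ¬ VertexDecomposableOn (Pgraph m)
      (mkSet (fun _ => True) (fun i => i.val = 0) (fun _ => True)) := by
  intro h
  rw [VertexDecomposableOn] at h
  obtain ⟨-, h⟩ := h
  rcases h with hne | ⟨x, hx, h1, h2⟩
  · exact hne (vZ 0) (by simp) (vZ 1) (by simp)
      (pg_adj_zz.2 (by intro hh; have := congrArg Fin.val hh; simp at this))
  · rcases x with j | i | l
    · rw [mkSet_erase_x] at h1
      obtain ⟨e, o, he, ho, hej, hoj⟩ := avoid_pair hm j
      refine not_vd_of_maxIndep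
        (maxS_ptz j 0 trivial (fun i hi => by rw [fin3_v0]; exact hi))
        (maxT3 e o he ho 0 (by simp [hej]) (by simp [hoj]) (by simp))
        ?_ h1
      rw [card2_ne (by simp), card3_xxz e o (by
        intro hh; have := congrArg Fin.val hh; omega) 0]
      omega
    · rw [mkSet_erase_y] at h1
      have heq : mkSet (m := m) (fun _ => True) (fun i' => i'.val = 0 ∧ i' ≠ i)
          (fun _ => True) =
          mkSet (fun _ => True) (fun _ => False) (fun _ => True) := by
        refine mkSet_congr (fun a => Iff.rfl) (fun i' => ?_) (fun k => Iff.rfl)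
        simp only [mem_mkSet_y] at hx
        constructor
        · rintro ⟨h1', h2'⟩
          exact h2' (Fin.ext (by omega))
        · exact False.elim
      rw [heq] at h1
      exact not_vd_XZ hm 0 1 (by intro hh; have := congrArg Fin.val hh; simp at this)
        trivial trivial h1
    · by_cases hl : l.val = 0
      · rw [delN_z_to_sX l (fun i hi => by omega)] at h2
        exact not_vd_sX hm h2
      · rw [mkSet_erase_z] at h1
        have heq : mkSet (m := m) (fun _ => True) (fun i => i.val = 0)
            (fun k => True ∧ k ≠ l) =
            mkSet (fun _ => True) (fun i => i.val = 0) (fun k => k.val ≠ l.val) := by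
          refine mkSet_congr (fun a => Iff.rfl) (fun i => Iff.rfl) (fun k => ?_)
          simp only [true_and, ne_eq, Fin.ext_iff]
        rw [heq] at h1
        exact not_vd_Xy0z0w hm l (by have := l.isLt; omega) h1

end Neg2
section Neg3

variable {m : ℕ}

lemma maxS_ptz_univ (j : Fin (2*m)) (c : Fin 3)
    (hyc : ∀ i : Fin 2, i.val ≠ c.val → (pt j).val % 2 = i.val) :
    IsMaxIndepIn (Pgraph m)
      (mkSet (fun a => True ∧ a ≠ j) (fun _ => True) (fun _ => True))
      {vX (pt j), vZ c} := by
  rw [maxIndep_iff]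
  refine ⟨⟨?_, ?_⟩, ?_⟩
  · intro v hv
    simp only [Finset.mem_insert, Finset.mem_singleton] at hv
    rcases hv with rfl | rfl
    · simp only [mem_mkSet_x]
      exact ⟨trivial, pt_ne j⟩
    · simp
  · intro u hu v hv
    simp only [Finset.mem_insert, Finset.mem_singleton] at hu hv
    rcases hu with rfl | rfl <;> rcases hv with rfl | rfl
    · exact (Pgraph m).irrefl
    · exact pg_adj_xz
    · exact pg_adj_zx
    · exact (Pgraph m).irrefl
  · intro v hvA hvS
    simp only [Finset.mem_insert, Finset.mem_singleton, not_or] at hvS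
    obtain ⟨hv1, hv2⟩ := hvS
    rcases v with b | i | l
    · refine ⟨vX (pt j), by simp, ?_⟩
      rw [pg_adj_xx]
      intro hh
      rw [pt_half] at hh
      rcases eq_or_pt hh.symm with h | h
      · simp only [mem_mkSet_x] at hvA
        exact hvA.2 h
      · exact hv1 (congrArg vX h)
    · by_cases hi : i.val = c.val
      · exact ⟨vZ c, by simp, by rw [pg_adj_zy]; exact hi⟩
      · exact ⟨vX (pt j), by simp, by rw [pg_adj_xy]; exact hyc i hi⟩
    · refine ⟨vZ c, by simp, ?_⟩
      rw [pg_adj_zz]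
      exact fun hh => hv2 (congrArg vZ hh.symm)

lemma not_vd_erase_univ_x (hm : 2 ≤ m) (j : Fin (2*m)) :
    ¬ VertexDecomposableOn (Pgraph m)
      (mkSet (fun a => True ∧ a ≠ j) (fun _ => True) (fun _ => True)) := by
  intro h
  have hwc := vd_wc h
  obtain ⟨e, o, he, ho, hej, hoj⟩ := avoid_pair hm j
  have hT := maxT3 (A := mkSet (fun a => True ∧ a ≠ j) (fun _ => True) (fun _ => True))
    e o he ho 2 (by simp [hej]) (by simp [hoj]) (by simp)
  rcases Nat.mod_two_eq_zero_or_one (pt j).val with hp | hp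
  · have hS := maxS_ptz_univ j 1 (fun i hi => by
      have := i.isLt
      rw [fin3_v1] at hi
      omega)
    have hcard := hwc _ _ hS hT
    rw [card2_ne (by simp), card3_xxz e o (by
      intro hh; have := congrArg Fin.val hh; omega) 2] at hcard
    omega
  · have hS := maxS_ptz_univ j 0 (fun i hi => by
      have := i.isLt
      rw [fin3_v0] at hi
      omega)
    have hcard := hwc _ _ hS hT
    rw [card2_ne (by simp), card3_xxz e o (by
      intro hh; have := congrArg Fin.val hh; omega) 2] at hcard
    omega

lemma not_vd_erase_univ_z2 (hm : 2 ≤ m) (l : Fin 3) (hl : l.val = 2) :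
    ¬ VertexDecomposableOn (Pgraph m)
      (mkSet (fun _ => True) (fun _ => True) (fun k => True ∧ k ≠ l)) := by
  intro h
  have hwc := vd_wc h
  obtain ⟨e, o, he, ho, hej, hoj⟩ := avoid_pair hm ⟨0, by omega⟩
  have hT := maxT3 (A := mkSet (fun _ => True) (fun _ => True) (fun k => True ∧ k ≠ l))
    e o he ho 0 (by simp) (by simp)
    (by simp only [mem_mkSet_z, true_and]; intro hh; rw [← hh] at hl; simp at hl)
  have hS : IsMaxIndepIn (Pgraph m)
      (mkSet (fun _ => True) (fun _ => True) (fun k => True ∧ k ≠ l))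
      {vY 0, vY 1} := by
    rw [maxIndep_iff]
    refine ⟨⟨?_, ?_⟩, ?_⟩
    · intro v hv
      simp only [Finset.mem_insert, Finset.mem_singleton] at hv
      rcases hv with rfl | rfl <;> simp
    · intro u hu v hv
      simp only [Finset.mem_insert, Finset.mem_singleton] at hu hv
      rcases hu with rfl | rfl <;> rcases hv with rfl | rfl <;> exact pg_adj_yy
    · intro v hvA hvS
      simp only [Finset.mem_insert, Finset.mem_singleton, not_or] at hvS
      obtain ⟨hv1, hv2⟩ := hvS
      rcases v with b | i | k
      · rcases Nat.mod_two_eq_zero_or_one b.val with hb | hb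
        · exact ⟨vY 0, by simp, by rw [pg_adj_yx]; omega⟩
        · exact ⟨vY 1, by simp, by rw [pg_adj_yx]; omega⟩
      · exfalso
        rcases (show i.val = 0 ∨ i.val = 1 from by have := i.isLt; omega) with h' | h'
        · exact hv1 (congrArg vY (Fin.ext h'))
        · exact hv2 (congrArg vY (Fin.ext h'))
      · simp only [mem_mkSet_z, true_and] at hvA
        have hkb := k.isLt
        have hk : k.val = 0 ∨ k.val = 1 := by
          have : k.val ≠ l.val := fun hh => hvA (Fin.ext hh)
          omega
        rcases hk with h' | h'
        · exact ⟨vY 0, by simp, by rw [pg_adj_yz]; omega⟩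
        · exact ⟨vY 1, by simp, by rw [pg_adj_yz]; omega⟩
  have hcard := hwc _ _ hS hT
  rw [card2_ne (by simp), card3_xxz e o (by
    intro hh; have := congrArg Fin.val hh; omega) 0] at hcard
  omega

end Neg3

theorem statement16_aux (m : ℕ) (hm : 2 ≤ m) :
    VertexDecomposable (Pgraph m) ∧
    Shed (Pgraph m) =
      {Sum.inr (Sum.inr 0), Sum.inr (Sum.inr 1)} := by
  have hm1 : 1 ≤ m := by omega
  constructor
  · exact vd_univ hm1
  · ext v
    simp only [Shed, Set.mem_setOf_eq, Set.mem_insert_iff, Set.mem_singleton_iff]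
    constructor
    · rintro ⟨hvd1, hvd2⟩
      rcases v with j | i | l
      · exfalso
        rw [univ_eq_mkSet, mkSet_erase_x] at hvd1
        exact not_vd_erase_univ_x hm j hvd1
      · exfalso
        rw [univ_eq_mkSet, mkSet_erase_y] at hvd1
        rcases (show i.val = 0 ∨ i.val = 1 from by have := i.isLt; omega) with h | h
        · have heq : mkSet (m := m) (fun _ => True) (fun i' => True ∧ i' ≠ i)
              (fun _ => True)
              = mkSet (fun _ => True) (fun i' => i'.val = 1) (fun _ => True) := by
            refine mkSet_congr (fun a => Iff.rfl) (fun i' => ?_) (fun k => Iff.rfl)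
            have := i'.isLt
            simp only [true_and, ne_eq, Fin.ext_iff]
            constructor
            · intro hh; omega
            · intro hh hh2; omega
          rw [heq] at hvd1
          exact not_vd_sA2 hm hvd1
        · have heq : mkSet (m := m) (fun _ => True) (fun i' => True ∧ i' ≠ i)
              (fun _ => True)
              = mkSet (fun _ => True) (fun i' => i'.val = 0) (fun _ => True) := by
            refine mkSet_congr (fun a => Iff.rfl) (fun i' => ?_) (fun k => Iff.rfl)
            have := i'.isLt
            simp only [true_and, ne_eq, Fin.ext_iff]
            constructor
            · intro hh; omega
            · intro hh hh2; omega
          rw [heq] at hvd1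
          exact not_vd_sA2' hm hvd1
      · rcases (show l.val = 0 ∨ l.val = 1 ∨ l.val = 2 from by have := l.isLt; omega)
          with h | h | h
        · exact Or.inl (congrArg vZ (Fin.ext h))
        · exact Or.inr (congrArg vZ (Fin.ext h))
        · exfalso
          rw [univ_eq_mkSet, mkSet_erase_z] at hvd1
          exact not_vd_erase_univ_z2 hm l h hvd1
    · rintro (rfl | rfl)
      · constructor
        · rw [erase_univ_z0]
          exact vd_sA1 hm1
        · rw [delN_univ_z0 hm1]
          exact vd_sB hm1 (2*m) (le_refl _)
      · constructor
        · rw [erase_univ_z1]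
          exact vd_sA1' hm1
        · rw [delN_univ_z1 hm1]
          exact vd_sBg0 hm1

/-- For every `m ≥ 2`, the graph `P_m` is vertex decomposable, and its
shedding vertices are exactly `z_1` and `z_2` (0-indexed: `z_0` and `z_1`). -/
theorem statement16 (m : ℕ) (hm : 2 ≤ m) :
    VertexDecomposable (Pgraph m) ∧
    Shed (Pgraph m) =
      {Sum.inr (Sum.inr 0), Sum.inr (Sum.inr 1)} := by
  exact statement16_aux m hm
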